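/- arXiv:2603.19713 — 13 statements merged into one kernel-verified Lean document; each statement's English description precedes it below -/
import Mathlib

section
/- The classification risk decomposes through the Pcomp marginals as R(g) = R_{S-PC}(g) + R_{D-PC}(g), where R_{S-PC}(g) = (1/(π₊−π₋))·[∫(π₊³ℓ₊ − π₊²π₋ℓ₋) dp̃₊ + ∫(π₊π₋²ℓ₊ − π₋³ℓ₋) dp̃₋] and R_{D-PC}(g) = (1/(π₊−π₋))·[∫(π₋(π₊²−π₋)ℓ₊ + π₊(π₋−π₊²)ℓ₋) dp̃₊ + ∫(π₋(π₋²−π₊)ℓ₊ + π₊(π₊−π₋²)ℓ₋) dp̃₋]. -/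
open MeasureTheory

lemma aux_integrable_of_bdd {X : Type*} [MeasurableSpace X] (μ : Measure X) [IsFiniteMeasure μ]
    {f : X → ℝ} (hf : Measurable f) (C : ℝ) (h0 : ∀ x, 0 ≤ f x) (h1 : ∀ x, f x ≤ C) :
    Integrable f μ := by
  apply Integrable.mono' (integrable_const C) hf.aestronglyMeasurable
  filter_upwards with x
  rw [Real.norm_eq_abs, abs_of_nonneg (h0 x)]
  exact h1 x

lemma aux_comb {X : Type*} [MeasurableSpace X] (μ ν : Measure X) [IsFiniteMeasure μ]
    [IsFiniteMeasure ν]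
    {f h : X → ℝ} (hfμ : Integrable f μ) (hfν : Integrable f ν)
    (hhμ : Integrable h μ) (hhν : Integrable h ν)
    (α β w1 w2 : ℝ) (hw1 : 0 ≤ w1) (hw2 : 0 ≤ w2) :
    ∫ x, (α * f x + β * h x) ∂(ENNReal.ofReal w1 • μ + ENNReal.ofReal w2 • ν)
      = w1 * (α * ∫ x, f x ∂μ + β * ∫ x, h x ∂μ)
        + w2 * (α * ∫ x, f x ∂ν + β * ∫ x, h x ∂ν) := by
  have hμ : Integrable (fun x => α * f x + β * h x) (ENNReal.ofReal w1 • μ) :=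
    Integrable.smul_measure ((hfμ.const_mul α).add (hhμ.const_mul β)) (by simp)
  have hν : Integrable (fun x => α * f x + β * h x) (ENNReal.ofReal w2 • ν) :=
    Integrable.smul_measure ((hfν.const_mul α).add (hhν.const_mul β)) (by simp)
  rw [integral_add_measure hμ hν, integral_smul_measure, integral_smul_measure,
    integral_add (hfμ.const_mul α) (hhμ.const_mul β),
    integral_add (hfν.const_mul α) (hhν.const_mul β),
    integral_const_mul, integral_const_mul, integral_const_mul, integral_const_mul,
    ENNReal.toReal_ofReal hw1, ENNReal.toReal_ofReal hw2, smul_eq_mul, smul_eq_mul]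

/-- The classification risk decomposes through the Pcomp marginals as
`R(g) = R_{S-PC}(g) + R_{D-PC}(g)`. -/
theorem stmt0
    {X : Type*} [MeasurableSpace X]
    (μp μn : Measure X) [IsProbabilityMeasure μp] [IsProbabilityMeasure μn]
    (πp πn : ℝ) (hπ0 : 0 < πp) (hπ1 : πp < 1) (hπhalf : πp ≠ 1/2)
    (hπn : πn = 1 - πp)
    (Cℓ : ℝ) (hCℓ : 0 < Cℓ)
    (ℓ : ℝ → ℤ → ℝ)
    (hℓbd : ∀ z : ℝ, ∀ t ∈ ({-1, 1} : Set ℤ), 0 ≤ ℓ z t ∧ ℓ z t ≤ Cℓ)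
    (hℓmeas : ∀ t ∈ ({-1, 1} : Set ℤ), Measurable fun z => ℓ z t)
    (g : X → ℝ) (hg : Measurable g)
    (ptp ptn : Measure X)
    (hptp : ptp = ENNReal.ofReal (πp/(πp+πn^2)) • μp + ENNReal.ofReal (πn^2/(πp+πn^2)) • μn)
    (hptn : ptn = ENNReal.ofReal (πp^2/(πp^2+πn)) • μp + ENNReal.ofReal (πn/(πp^2+πn)) • μn) :
    πp * (∫ x, ℓ (g x) 1 ∂μp) + πn * (∫ x, ℓ (g x) (-1) ∂μn)
      = (1/(πp - πn)) *
          ((∫ x, (πp^3 * ℓ (g x) 1 - πp^2*πn * ℓ (g x) (-1)) ∂ptp)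
            + (∫ x, (πp*πn^2 * ℓ (g x) 1 - πn^3 * ℓ (g x) (-1)) ∂ptn))
        + (1/(πp - πn)) *
          ((∫ x, (πn*(πp^2-πn) * ℓ (g x) 1 + πp*(πn-πp^2) * ℓ (g x) (-1)) ∂ptp)
            + (∫ x, (πn*(πn^2-πp) * ℓ (g x) 1 + πp*(πp-πn^2) * ℓ (g x) (-1)) ∂ptn)) := by
  subst hπn hptp hptn
  set f : X → ℝ := fun x => ℓ (g x) 1 with hf
  set h : X → ℝ := fun x => ℓ (g x) (-1) with hh
  have h1mem : (1 : ℤ) ∈ ({-1, 1} : Set ℤ) := by simp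
  have hm1mem : (-1 : ℤ) ∈ ({-1, 1} : Set ℤ) := by simp
  have hfm : Measurable f := (hℓmeas 1 h1mem).comp hg
  have hhm : Measurable h := (hℓmeas (-1) hm1mem).comp hg
  have hfμp : Integrable f μp :=
    aux_integrable_of_bdd μp hfm Cℓ (fun x => (hℓbd (g x) 1 h1mem).1)
      (fun x => (hℓbd (g x) 1 h1mem).2)
  have hfμn : Integrable f μn :=
    aux_integrable_of_bdd μn hfm Cℓ (fun x => (hℓbd (g x) 1 h1mem).1)
      (fun x => (hℓbd (g x) 1 h1mem).2)
  have hhμp : Integrable h μp :=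
    aux_integrable_of_bdd μp hhm Cℓ (fun x => (hℓbd (g x) (-1) hm1mem).1)
      (fun x => (hℓbd (g x) (-1) hm1mem).2)
  have hhμn : Integrable h μn :=
    aux_integrable_of_bdd μn hhm Cℓ (fun x => (hℓbd (g x) (-1) hm1mem).1)
      (fun x => (hℓbd (g x) (-1) hm1mem).2)
  have hπn0 : 0 < 1 - πp := by linarith
  have hw1 : (0:ℝ) ≤ πp/(πp+(1-πp)^2) := by positivity
  have hw2 : (0:ℝ) ≤ (1-πp)^2/(πp+(1-πp)^2) := by positivity
  have hv1 : (0:ℝ) ≤ πp^2/(πp^2+(1-πp)) := by positivity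
  have hv2 : (0:ℝ) ≤ (1-πp)/(πp^2+(1-πp)) := by positivity
  have e1 := aux_comb μp μn hfμp hfμn hhμp hhμn (πp^3) (-(πp^2*(1-πp)))
    (πp/(πp+(1-πp)^2)) ((1-πp)^2/(πp+(1-πp)^2)) hw1 hw2
  have e2 := aux_comb μp μn hfμp hfμn hhμp hhμn (πp*(1-πp)^2) (-((1-πp)^3))
    (πp^2/(πp^2+(1-πp))) ((1-πp)/(πp^2+(1-πp))) hv1 hv2
  have e3 := aux_comb μp μn hfμp hfμn hhμp hhμn ((1-πp)*(πp^2-(1-πp))) (πp*((1-πp)-πp^2))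
    (πp/(πp+(1-πp)^2)) ((1-πp)^2/(πp+(1-πp)^2)) hw1 hw2
  have e4 := aux_comb μp μn hfμp hfμn hhμp hhμn ((1-πp)*((1-πp)^2-πp)) (πp*(πp-(1-πp)^2))
    (πp^2/(πp^2+(1-πp))) ((1-πp)/(πp^2+(1-πp))) hv1 hv2
  have g1 : (fun x => πp^3 * f x - πp^2*(1-πp) * h x)
      = (fun x => πp^3 * f x + (-(πp^2*(1-πp))) * h x) := by funext x; ring
  have g2 : (fun x => πp*(1-πp)^2 * f x - (1-πp)^3 * h x)
      = (fun x => πp*(1-πp)^2 * f x + (-((1-πp)^3)) * h x) := by funext x; ring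
  rw [g1, g2, e1, e2, e3, e4]
  have hA : πp + (1-πp)^2 ≠ 0 := by nlinarith
  have hB : πp^2 + (1-πp) ≠ 0 := by nlinarith
  have hC : πp - (1-πp) ≠ 0 := by
    intro hc
    apply hπhalf
    linarith
  field_simp
  ring
end

section
/- The similar-pair risk equals the similar SD-Pcomp risk: π_S · ∫_{X×X} (𝓛(g(x),+1) + 𝓛(g(x'),+1))/2 dp_S(x,x') = (1/(π₊−π₋))·[∫(π₊³ℓ₊ − π₊²π₋ℓ₋) dp̃₊ + ∫(π₊π₋²ℓ₊ − π₋³ℓ₋) dp̃₋]. -/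
open MeasureTheory

lemma integrable_of_bound' {X : Type*} [MeasurableSpace X] (μ : Measure X)
    [IsFiniteMeasure μ] {f : X → ℝ} (hf : Measurable f) (M : ℝ)
    (hb : ∀ x, |f x| ≤ M) : Integrable f μ := by
  refine (integrable_const M).mono' hf.aestronglyMeasurable (ae_of_all _ fun x => ?_)
  simpa using hb x

lemma integral_pair_avg {X : Type*} [MeasurableSpace X] (μ ν : Measure X)
    [IsProbabilityMeasure μ] [IsProbabilityMeasure ν] {F : X → ℝ}
    (hF : Measurable F) (M : ℝ) (hb : ∀ x, |F x| ≤ M) :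
    ∫ w : X × X, (F w.1 + F w.2)/2 ∂(μ.prod ν) = (∫ x, F x ∂μ + ∫ x, F x ∂ν)/2 := by
  have h1 : Integrable (fun w : X × X => F w.1) (μ.prod ν) :=
    integrable_of_bound' _ (hF.comp measurable_fst) M (fun x => hb x.1)
  have h2 : Integrable (fun w : X × X => F w.2) (μ.prod ν) :=
    integrable_of_bound' _ (hF.comp measurable_snd) M (fun x => hb x.2)
  rw [integral_div, integral_add h1 h2]
  have e1 : ∫ w : X × X, F w.1 ∂(μ.prod ν) = ∫ x, F x ∂μ := by
    rw [← integral_map measurable_fst.aemeasurable hF.aestronglyMeasurable,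
      Measure.map_fst_prod, measure_univ, one_smul]
  have e2 : ∫ w : X × X, F w.2 ∂(μ.prod ν) = ∫ x, F x ∂ν := by
    rw [← integral_map measurable_snd.aemeasurable hF.aestronglyMeasurable,
      Measure.map_snd_prod, measure_univ, one_smul]
  rw [e1, e2]

/-- The similar-pair risk equals the similar SD-Pcomp risk. -/
theorem stmt1
    {X : Type*} [MeasurableSpace X]
    (μp μn : Measure X) [IsProbabilityMeasure μp] [IsProbabilityMeasure μn]
    (πp πn πS πD : ℝ) (hπ0 : 0 < πp) (hπ1 : πp < 1) (hπhalf : πp ≠ 1/2)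
    (hπn : πn = 1 - πp) (hπS : πS = πp^2 + πn^2) (hπD : πD = 2*πp*πn)
    (Cℓ : ℝ) (hCℓ : 0 < Cℓ)
    (ℓ : ℝ → ℤ → ℝ)
    (hℓbd : ∀ z : ℝ, ∀ t ∈ ({-1, 1} : Set ℤ), 0 ≤ ℓ z t ∧ ℓ z t ≤ Cℓ)
    (hℓmeas : ∀ t ∈ ({-1, 1} : Set ℤ), Measurable fun z => ℓ z t)
    (g : X → ℝ) (hg : Measurable g)
    (ptp ptn : Measure X)
    (hptp : ptp = ENNReal.ofReal (πp/(πp+πn^2)) • μp + ENNReal.ofReal (πn^2/(πp+πn^2)) • μn)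
    (hptn : ptn = ENNReal.ofReal (πp^2/(πp^2+πn)) • μp + ENNReal.ofReal (πn/(πp^2+πn)) • μn)
    (pS : Measure (X × X))
    (hpS : pS = ENNReal.ofReal (πp^2/πS) • (μp.prod μp) + ENNReal.ofReal (πn^2/πS) • (μn.prod μn))
    (L : ℝ → ℤ → ℝ)
    (hL : ∀ z t, L z t = (πp * ℓ z t - πn * ℓ z (-t)) / (πp - πn)) :
    πS * (∫ w : X × X, (L (g w.1) 1 + L (g w.2) 1)/2 ∂pS)
      = (1/(πp - πn)) *
          ((∫ x, (πp^3 * ℓ (g x) 1 - πp^2*πn * ℓ (g x) (-1)) ∂ptp)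
            + (∫ x, (πp*πn^2 * ℓ (g x) 1 - πn^3 * ℓ (g x) (-1)) ∂ptn)) := by
  subst hπn hπS hπD hptp hptn hpS
  set q : ℝ := 1 - πp with hq
  have hq0 : 0 < q := by simp [hq]; linarith
  have hne : πp - q ≠ 0 := by
    simp only [hq]
    intro h; apply hπhalf; linarith
  have hSpos : 0 < πp^2 + q^2 := by positivity
  have hKpos : 0 < πp + q^2 := by positivity
  have hK2pos : 0 < πp^2 + q := by positivity
  -- measurability / bounds for the two loss components
  have hm1 : Measurable fun x => ℓ (g x) 1 := (hℓmeas 1 (by simp)).comp hg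
  have hm2 : Measurable fun x => ℓ (g x) (-1) := (hℓmeas (-1) (by simp)).comp hg
  have hb1 : ∀ x, |ℓ (g x) 1| ≤ Cℓ := fun x => by
    have := hℓbd (g x) 1 (by simp); rw [abs_le]; constructor <;> linarith [this.1, this.2]
  have hb2 : ∀ x, |ℓ (g x) (-1)| ≤ Cℓ := fun x => by
    have := hℓbd (g x) (-1) (by simp); rw [abs_le]; constructor <;> linarith [this.1, this.2]
  -- the corrected-loss composition
  set F : X → ℝ := fun x => L (g x) 1 with hF
  have hFeq : ∀ x, F x = (πp * ℓ (g x) 1 - q * ℓ (g x) (-1)) / (πp - q) := fun x => hL (g x) 1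
  have hFm : Measurable F := by
    simp only [hF, hL]
    exact ((hm1.const_mul πp).sub (hm2.const_mul q)).div_const _
  set M : ℝ := (|πp| * Cℓ + |q| * Cℓ) / |πp - q| with hM
  have hFb : ∀ x, |F x| ≤ M := by
    intro x
    rw [hFeq x, hM, abs_div]
    rw [div_le_div_iff_of_pos_right (abs_pos.mpr hne)]
    calc |πp * ℓ (g x) 1 - q * ℓ (g x) (-1)|
        ≤ |πp * ℓ (g x) 1| + |q * ℓ (g x) (-1)| := abs_sub _ _
      _ ≤ |πp| * Cℓ + |q| * Cℓ := by
          rw [abs_mul, abs_mul]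
          gcongr
          · exact hb1 x
          · exact hb2 x
  -- integrability facts
  have hi1p : Integrable (fun x => ℓ (g x) 1) μp := integrable_of_bound' _ hm1 Cℓ hb1
  have hi1n : Integrable (fun x => ℓ (g x) 1) μn := integrable_of_bound' _ hm1 Cℓ hb1
  have hi2p : Integrable (fun x => ℓ (g x) (-1)) μp := integrable_of_bound' _ hm2 Cℓ hb2
  have hi2n : Integrable (fun x => ℓ (g x) (-1)) μn := integrable_of_bound' _ hm2 Cℓ hb2
  set A := ∫ x, ℓ (g x) 1 ∂μp
  set B := ∫ x, ℓ (g x) (-1) ∂μp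
  set C := ∫ x, ℓ (g x) 1 ∂μn
  set D := ∫ x, ℓ (g x) (-1) ∂μn
  -- LHS
  have hFi : ∀ (ν : Measure X) [IsProbabilityMeasure ν], Integrable F ν := by
    intro ν _; exact integrable_of_bound' _ hFm M hFb
  have hHint : ∀ (μ ν : Measure X) [IsProbabilityMeasure μ] [IsProbabilityMeasure ν],
      Integrable (fun w : X × X => (F w.1 + F w.2)/2) (μ.prod ν) := by
    intro μ ν _ _
    exact (((integrable_of_bound' _ (hFm.comp measurable_fst) M fun x => hFb x.1).add
      (integrable_of_bound' _ (hFm.comp measurable_snd) M fun x => hFb x.2)).div_const 2)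
  have hLHS : (∫ w : X × X, (L (g w.1) 1 + L (g w.2) 1)/2
        ∂(ENNReal.ofReal (πp^2/(πp^2+q^2)) • (μp.prod μp)
          + ENNReal.ofReal (q^2/(πp^2+q^2)) • (μn.prod μn)))
      = (πp^2/(πp^2+q^2)) * ((πp * A - q * B)/(πp - q))
        + (q^2/(πp^2+q^2)) * ((πp * C - q * D)/(πp - q)) := by
    have h1 : ∀ x : X, L (g x) 1 = F x := fun x => rfl
    simp only [h1]
    rw [integral_add_measure
      ((hHint μp μp).smul_measure ENNReal.ofReal_ne_top)
      ((hHint μn μn).smul_measure ENNReal.ofReal_ne_top),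
      integral_smul_measure, integral_smul_measure,
      integral_pair_avg μp μp hFm M hFb, integral_pair_avg μn μn hFm M hFb,
      ENNReal.toReal_ofReal (by positivity), ENNReal.toReal_ofReal (by positivity)]
    have eμp : ∫ x, F x ∂μp = (πp * A - q * B)/(πp - q) := by
      simp only [hFeq]
      rw [integral_div, integral_sub (hi1p.const_mul _) (hi2p.const_mul _),
        integral_const_mul, integral_const_mul]
    have eμn : ∫ x, F x ∂μn = (πp * C - q * D)/(πp - q) := by
      simp only [hFeq]
      rw [integral_div, integral_sub (hi1n.const_mul _) (hi2n.const_mul _),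
        integral_const_mul, integral_const_mul]
    rw [eμp, eμn]
    simp only [smul_eq_mul]
    ring
  -- RHS pieces
  have hint1 : ∀ (ν : Measure X) [IsProbabilityMeasure ν],
      Integrable (fun x => πp^3 * ℓ (g x) 1 - πp^2*q * ℓ (g x) (-1)) ν := by
    intro ν _
    exact ((integrable_of_bound' _ hm1 Cℓ hb1).const_mul _).sub
      ((integrable_of_bound' _ hm2 Cℓ hb2).const_mul _)
  have hint2 : ∀ (ν : Measure X) [IsProbabilityMeasure ν],
      Integrable (fun x => πp*q^2 * ℓ (g x) 1 - q^3 * ℓ (g x) (-1)) ν := by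
    intro ν _
    exact ((integrable_of_bound' _ hm1 Cℓ hb1).const_mul _).sub
      ((integrable_of_bound' _ hm2 Cℓ hb2).const_mul _)
  have hR1 : (∫ x, (πp^3 * ℓ (g x) 1 - πp^2*q * ℓ (g x) (-1))
        ∂(ENNReal.ofReal (πp/(πp+q^2)) • μp + ENNReal.ofReal (q^2/(πp+q^2)) • μn))
      = (πp/(πp+q^2)) * (πp^3 * A - πp^2*q * B)
        + (q^2/(πp+q^2)) * (πp^3 * C - πp^2*q * D) := by
    rw [integral_add_measure ((hint1 μp).smul_measure ENNReal.ofReal_ne_top)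
        ((hint1 μn).smul_measure ENNReal.ofReal_ne_top),
      integral_smul_measure, integral_smul_measure,
      ENNReal.toReal_ofReal (by positivity), ENNReal.toReal_ofReal (by positivity),
      integral_sub ((integrable_of_bound' _ hm1 Cℓ hb1).const_mul _)
        ((integrable_of_bound' _ hm2 Cℓ hb2).const_mul _),
      integral_sub ((integrable_of_bound' _ hm1 Cℓ hb1).const_mul _)
        ((integrable_of_bound' _ hm2 Cℓ hb2).const_mul _),
      integral_const_mul, integral_const_mul, integral_const_mul, integral_const_mul]
    simp only [smul_eq_mul]
    rfl
  have hR2 : (∫ x, (πp*q^2 * ℓ (g x) 1 - q^3 * ℓ (g x) (-1))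
        ∂(ENNReal.ofReal (πp^2/(πp^2+q)) • μp + ENNReal.ofReal (q/(πp^2+q)) • μn))
      = (πp^2/(πp^2+q)) * (πp*q^2 * A - q^3 * B)
        + (q/(πp^2+q)) * (πp*q^2 * C - q^3 * D) := by
    rw [integral_add_measure ((hint2 μp).smul_measure ENNReal.ofReal_ne_top)
        ((hint2 μn).smul_measure ENNReal.ofReal_ne_top),
      integral_smul_measure, integral_smul_measure,
      ENNReal.toReal_ofReal (by positivity), ENNReal.toReal_ofReal (by positivity),
      integral_sub ((integrable_of_bound' _ hm1 Cℓ hb1).const_mul _)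
        ((integrable_of_bound' _ hm2 Cℓ hb2).const_mul _),
      integral_sub ((integrable_of_bound' _ hm1 Cℓ hb1).const_mul _)
        ((integrable_of_bound' _ hm2 Cℓ hb2).const_mul _),
      integral_const_mul, integral_const_mul, integral_const_mul, integral_const_mul]
    simp only [smul_eq_mul]
    rfl
  rw [hLHS, hR1, hR2]
  have hqpq : πp + q^2 = πp^2 + q := by simp only [hq]; ring
  rw [hqpq]
  field_simp
  ring
end

section
/- The dissimilar-pair risk equals the dissimilar SD-Pcomp risk: π_D · ∫_{X×X} (𝓛(g(x),−1) + 𝓛(g(x'),−1))/2 dp_D(x,x') = (1/(π₊−π₋))·[∫(π₋(π₊²−π₋)ℓ₊ + π₊(π₋−π₊²)ℓ₋) dp̃₊ + ∫(π₋(π₋²−π₊)ℓ₊ + π₊(π₊−π₋²)ℓ₋) dp̃₋]. -/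
open MeasureTheory

lemma int_bdd {X : Type*} [MeasurableSpace X] (μ : Measure X) [IsFiniteMeasure μ]
    {f : X → ℝ} (hf : Measurable f) {C : ℝ} (h : ∀ x, |f x| ≤ C) :
    Integrable f μ :=
  (integrable_const C).mono' hf.aestronglyMeasurable (Filter.Eventually.of_forall h)

lemma prod_fst_int {X : Type*} [MeasurableSpace X] (μ ν : Measure X)
    [IsProbabilityMeasure μ] [IsProbabilityMeasure ν] (f : X → ℝ) :
    ∫ w : X × X, f w.1 ∂(μ.prod ν) = ∫ x, f x ∂μ := by
  have := MeasureTheory.integral_prod_mul (μ := μ) (ν := ν) f (fun _ => (1:ℝ))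
  simpa using this

lemma prod_snd_int {X : Type*} [MeasurableSpace X] (μ ν : Measure X)
    [IsProbabilityMeasure μ] [IsProbabilityMeasure ν] (f : X → ℝ) :
    ∫ w : X × X, f w.2 ∂(μ.prod ν) = ∫ x, f x ∂ν := by
  have := MeasureTheory.integral_prod_mul (μ := μ) (ν := ν) (fun _ => (1:ℝ)) f
  simpa using this

/-- The dissimilar-pair risk equals the dissimilar SD-Pcomp risk. -/
theorem stmt2
    {X : Type*} [MeasurableSpace X]
    (μp μn : Measure X) [IsProbabilityMeasure μp] [IsProbabilityMeasure μn]
    (πp πn πS πD : ℝ) (hπ0 : 0 < πp) (hπ1 : πp < 1) (hπhalf : πp ≠ 1/2)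
    (hπn : πn = 1 - πp) (hπS : πS = πp^2 + πn^2) (hπD : πD = 2*πp*πn)
    (Cℓ : ℝ) (hCℓ : 0 < Cℓ)
    (ℓ : ℝ → ℤ → ℝ)
    (hℓbd : ∀ z : ℝ, ∀ t ∈ ({-1, 1} : Set ℤ), 0 ≤ ℓ z t ∧ ℓ z t ≤ Cℓ)
    (hℓmeas : ∀ t ∈ ({-1, 1} : Set ℤ), Measurable fun z => ℓ z t)
    (g : X → ℝ) (hg : Measurable g)
    (ptp ptn : Measure X)
    (hptp : ptp = ENNReal.ofReal (πp/(πp+πn^2)) • μp + ENNReal.ofReal (πn^2/(πp+πn^2)) • μn)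
    (hptn : ptn = ENNReal.ofReal (πp^2/(πp^2+πn)) • μp + ENNReal.ofReal (πn/(πp^2+πn)) • μn)
    (pD : Measure (X × X))
    (hpD : pD = ENNReal.ofReal (1/2) • (μp.prod μn) + ENNReal.ofReal (1/2) • (μn.prod μp))
    (L : ℝ → ℤ → ℝ)
    (hL : ∀ z t, L z t = (πp * ℓ z t - πn * ℓ z (-t)) / (πp - πn)) :
    πD * (∫ w : X × X, (L (g w.1) (-1) + L (g w.2) (-1))/2 ∂pD)
      = (1/(πp - πn)) *
          ((∫ x, (πn*(πp^2-πn) * ℓ (g x) 1 + πp*(πn-πp^2) * ℓ (g x) (-1)) ∂ptp)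
            + (∫ x, (πn*(πn^2-πp) * ℓ (g x) 1 + πp*(πp-πn^2) * ℓ (g x) (-1)) ∂ptn)) := by
  have hπn0 : 0 < πn := by rw [hπn]; linarith
  -- basic measurability and bounds
  have hm1 : Measurable fun x => ℓ (g x) 1 := (hℓmeas 1 (by simp)).comp hg
  have hmm : Measurable fun x => ℓ (g x) (-1) := (hℓmeas (-1) (by simp)).comp hg
  have hb1 : ∀ x : X, |ℓ (g x) 1| ≤ Cℓ := fun x => abs_le.mpr
    ⟨by linarith [(hℓbd (g x) 1 (by simp)).1], (hℓbd (g x) 1 (by simp)).2⟩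
  have hbm : ∀ x : X, |ℓ (g x) (-1)| ≤ Cℓ := fun x => abs_le.mpr
    ⟨by linarith [(hℓbd (g x) (-1) (by simp)).1], (hℓbd (g x) (-1) (by simp)).2⟩
  -- base integrals
  set A := ∫ x, ℓ (g x) 1 ∂μp with hA
  set B := ∫ x, ℓ (g x) (-1) ∂μp with hB
  set C := ∫ x, ℓ (g x) 1 ∂μn with hC
  set D := ∫ x, ℓ (g x) (-1) ∂μn with hD
  -- the function G x = L (g x) (-1)
  set G : X → ℝ := fun x => (πp * ℓ (g x) (-1) - πn * ℓ (g x) 1) / (πp - πn) with hG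
  have hGeq : ∀ x, L (g x) (-1) = G x := by
    intro x; rw [hL]; simp [hG]
  have hGmeas : Measurable G := (((hmm.const_mul πp).sub (hm1.const_mul πn)).div_const _)
  have hd : 0 < |πp - πn| := abs_pos.mpr (by intro h; apply hπhalf; rw [hπn] at h; linarith)
  have hGbd : ∀ x, |G x| ≤ (πp * Cℓ + πn * Cℓ) / |πp - πn| := by
    intro x
    rw [hG, abs_div]
    gcongr
    calc |πp * ℓ (g x) (-1) - πn * ℓ (g x) 1|
        ≤ |πp * ℓ (g x) (-1)| + |πn * ℓ (g x) 1| := abs_sub _ _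
      _ ≤ πp * Cℓ + πn * Cℓ := by
          rw [abs_mul, abs_mul, abs_of_pos hπ0, abs_of_pos hπn0]
          have := hbm x; have := hb1 x
          nlinarith
  -- integrals of G
  have hGint : ∀ (μ : Measure X) [IsProbabilityMeasure μ], Integrable G μ := by
    intro μ _; exact int_bdd μ hGmeas hGbd
  have hGμp : ∫ x, G x ∂μp = (πp * B - πn * A) / (πp - πn) := by
    rw [hG]
    rw [integral_div, integral_sub ((int_bdd μp hmm hbm).const_mul _)
      ((int_bdd μp hm1 hb1).const_mul _), integral_const_mul, integral_const_mul]
  have hGμn : ∫ x, G x ∂μn = (πp * D - πn * C) / (πp - πn) := by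
    rw [hG]
    rw [integral_div, integral_sub ((int_bdd μn hmm hbm).const_mul _)
      ((int_bdd μn hm1 hb1).const_mul _), integral_const_mul, integral_const_mul]
  -- product integrals
  have hprod : ∀ (μ ν : Measure X) [IsProbabilityMeasure μ] [IsProbabilityMeasure ν],
      ∫ w : X × X, (L (g w.1) (-1) + L (g w.2) (-1))/2 ∂(μ.prod ν)
        = ((∫ x, G x ∂μ) + (∫ x, G x ∂ν)) / 2 := by
    intro μ ν _ _
    have h1 : Integrable (fun w : X × X => G w.1) (μ.prod ν) :=
      int_bdd _ (hGmeas.comp measurable_fst) (fun w => hGbd w.1)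
    have h2 : Integrable (fun w : X × X => G w.2) (μ.prod ν) :=
      int_bdd _ (hGmeas.comp measurable_snd) (fun w => hGbd w.2)
    calc ∫ w : X × X, (L (g w.1) (-1) + L (g w.2) (-1))/2 ∂(μ.prod ν)
        = ∫ w : X × X, (G w.1 + G w.2)/2 ∂(μ.prod ν) := by
          congr 1; funext w; rw [hGeq, hGeq]
      _ = ((∫ x, G x ∂μ) + (∫ x, G x ∂ν)) / 2 := by
          rw [integral_div, integral_add h1 h2, prod_fst_int, prod_snd_int]
  -- LHS
  have hFi : ∀ (μ ν : Measure X) [IsProbabilityMeasure μ] [IsProbabilityMeasure ν],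
      Integrable (fun w : X × X => (L (g w.1) (-1) + L (g w.2) (-1))/2) (μ.prod ν) := by
    intro μ ν _ _
    have : (fun w : X × X => (L (g w.1) (-1) + L (g w.2) (-1))/2)
        = fun w : X × X => (G w.1 + G w.2)/2 := by
      funext w; rw [hGeq, hGeq]
    rw [this]
    exact ((int_bdd _ (hGmeas.comp measurable_fst) (fun w => hGbd w.1)).add
      (int_bdd _ (hGmeas.comp measurable_snd) (fun w => hGbd w.2))).div_const _
  have hLHS : ∫ w : X × X, (L (g w.1) (-1) + L (g w.2) (-1))/2 ∂pD
      = ((πp * B - πn * A) / (πp - πn) + (πp * D - πn * C) / (πp - πn)) / 2 := by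
    rw [hpD, integral_add_measure ((hFi μp μn).smul_measure ENNReal.ofReal_ne_top)
      ((hFi μn μp).smul_measure ENNReal.ofReal_ne_top),
      integral_smul_measure, integral_smul_measure, hprod, hprod, hGμp, hGμn,
      ENNReal.toReal_ofReal (by norm_num : (0:ℝ) ≤ 1/2)]
    simp only [smul_eq_mul]
    ring
  -- RHS integrals
  have hpos1 : 0 < πp + πn^2 := by positivity
  have hpos2 : 0 < πp^2 + πn := by positivity
  have hmix : ∀ (c1 c2 : ℝ) (μ : Measure X) [IsProbabilityMeasure μ],
      ∫ x, (c1 * ℓ (g x) 1 + c2 * ℓ (g x) (-1)) ∂μ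
        = c1 * (∫ x, ℓ (g x) 1 ∂μ) + c2 * (∫ x, ℓ (g x) (-1) ∂μ) := by
    intro c1 c2 μ _
    rw [integral_add ((int_bdd μ hm1 hb1).const_mul _) ((int_bdd μ hmm hbm).const_mul _),
      integral_const_mul, integral_const_mul]
  have hmixI : ∀ (c1 c2 : ℝ) (μ : Measure X) [IsProbabilityMeasure μ],
      Integrable (fun x => c1 * ℓ (g x) 1 + c2 * ℓ (g x) (-1)) μ := by
    intro c1 c2 μ _
    exact ((int_bdd μ hm1 hb1).const_mul _).add ((int_bdd μ hmm hbm).const_mul _)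
  have hR1 : ∫ x, (πn*(πp^2-πn) * ℓ (g x) 1 + πp*(πn-πp^2) * ℓ (g x) (-1)) ∂ptp
      = (πp/(πp+πn^2)) * (πn*(πp^2-πn) * A + πp*(πn-πp^2) * B)
        + (πn^2/(πp+πn^2)) * (πn*(πp^2-πn) * C + πp*(πn-πp^2) * D) := by
    rw [hptp, integral_add_measure ((hmixI _ _ μp).smul_measure ENNReal.ofReal_ne_top)
      ((hmixI _ _ μn).smul_measure ENNReal.ofReal_ne_top),
      integral_smul_measure, integral_smul_measure, hmix, hmix,
      ENNReal.toReal_ofReal (by positivity), ENNReal.toReal_ofReal (by positivity)]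
    simp [smul_eq_mul, hA, hB, hC, hD]
  have hR2 : ∫ x, (πn*(πn^2-πp) * ℓ (g x) 1 + πp*(πp-πn^2) * ℓ (g x) (-1)) ∂ptn
      = (πp^2/(πp^2+πn)) * (πn*(πn^2-πp) * A + πp*(πp-πn^2) * B)
        + (πn/(πp^2+πn)) * (πn*(πn^2-πp) * C + πp*(πp-πn^2) * D) := by
    rw [hptn, integral_add_measure ((hmixI _ _ μp).smul_measure ENNReal.ofReal_ne_top)
      ((hmixI _ _ μn).smul_measure ENNReal.ofReal_ne_top),
      integral_smul_measure, integral_smul_measure, hmix, hmix,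
      ENNReal.toReal_ofReal (by positivity), ENNReal.toReal_ofReal (by positivity)]
    simp [smul_eq_mul, hA, hB, hC, hD]
  -- final algebra
  rw [hLHS, hR1, hR2, hπD, hπn]
  have h1 : πp - (1 - πp) ≠ 0 := by
    intro h; apply hπhalf; linarith
  have h2 : πp + (1 - πp)^2 ≠ 0 := by rw [← hπn]; positivity
  have h3 : πp^2 + (1 - πp) ≠ 0 := by rw [← hπn]; positivity
  rw [hπn] at *
  field_simp
  ring
end

section
/- For every γ ∈ [0,1] and all positive integers n_S, n_D, n, the convex combination of the SD estimator and the Pcomp estimator is unbiased: letting P = p_S^{⊗n_S} ⊗ p_D^{⊗n_D} ⊗ (p̃₊ ⊗ p̃₋)^{⊗n} be the product sampling measure and, for a sample consisting of pairs (x_{S,i}, x'_{S,i}) for i ≤ n_S, (x_{D,i}, x'_{D,i}) for i ≤ n_D, and (x_i, x'_i) for i ≤ n, setting R̂_SD = (π_S/n_S)Σ_{i=1}^{n_S}(𝓛(g(x_{S,i}),+1)+𝓛(g(x'_{S,i}),+1))/2 + (π_D/n_D)Σ_{i=1}^{n_D}(𝓛(g(x_{D,i}),−1)+𝓛(g(x'_{D,i}),−1))/2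 and R̂_PC = (1/n)Σ_{i=1}^{n}(ℓ(g(x_i),+1) − π₊ℓ(g(x_i),−1) + ℓ(g(x'_i),−1) − π₋ℓ(g(x'_i),+1)), one has ∫ (γ·R̂_SD + (1−γ)·R̂_PC) dP = R(g). -/
open MeasureTheory

lemma aux_map_eval {ι : Type*} [Fintype ι] {α : ι → Type*} [∀ i, MeasurableSpace (α i)]
    (μ : ∀ i, Measure (α i)) [∀ i, IsProbabilityMeasure (μ i)] (i : ι) :
    (Measure.pi μ).map (fun f => f i) = μ i := by
  classical
  ext s hs
  rw [Measure.map_apply (measurable_pi_apply i) hs]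
  have h : (fun f : ∀ j, α j => f i) ⁻¹' s =
      Set.pi Set.univ (Function.update (fun j => (Set.univ : Set (α j))) i s) := by
    ext f
    simp only [Set.mem_preimage, Set.mem_pi, Set.mem_univ, true_implies]
    constructor
    · intro hf j
      rcases eq_or_ne j i with rfl | hj
      · simpa using hf
      · simp [Function.update_of_ne hj]
    · intro hf
      simpa using hf i
  rw [h, Measure.pi_pi]
  rw [Finset.prod_eq_single i (fun j _ hj => by simp [Function.update_of_ne hj])
    (by simp)]
  simp

lemma aux_fst_smul {α β : Type*} [MeasurableSpace α] [MeasurableSpace β]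
    (c : ENNReal) (ρ : Measure (α × β)) : (c • ρ).fst = c • ρ.fst := by
  simp [Measure.fst, Measure.map_smul]

lemma aux_snd_smul {α β : Type*} [MeasurableSpace α] [MeasurableSpace β]
    (c : ENNReal) (ρ : Measure (α × β)) : (c • ρ).snd = c • ρ.snd := by
  simp [Measure.snd, Measure.map_smul]

lemma aux_int_bdd {Ω : Type*} [MeasurableSpace Ω] (P : Measure Ω) [IsFiniteMeasure P]
    (f : Ω → ℝ) (hf : Measurable f) (Cb : ℝ) (hb : ∀ ω, |f ω| ≤ Cb) :
    Integrable f P :=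
  (integrable_const Cb).mono' hf.aestronglyMeasurable
    (Filter.Eventually.of_forall (by simpa [Real.norm_eq_abs] using hb))

lemma aux_integral_two_smul {Y : Type*} [MeasurableSpace Y] (μ ν : Measure Y)
    (a b : ℝ) (ha : 0 ≤ a) (hb : 0 ≤ b) (f : Y → ℝ)
    (hfμ : Integrable f μ) (hfν : Integrable f ν) :
    ∫ y, f y ∂(ENNReal.ofReal a • μ + ENNReal.ofReal b • ν)
      = a * ∫ y, f y ∂μ + b * ∫ y, f y ∂ν := by
  rw [integral_add_measure (hfμ.smul_measure ENNReal.ofReal_ne_top)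
      (hfν.smul_measure ENNReal.ofReal_ne_top),
    integral_smul_measure, integral_smul_measure,
    ENNReal.toReal_ofReal ha, ENNReal.toReal_ofReal hb, smul_eq_mul, smul_eq_mul]

lemma aux_key {Ω X : Type*} [MeasurableSpace Ω] [MeasurableSpace X]
    (P : Measure Ω) (μp μn : Measure X) [IsFiniteMeasure μp] [IsFiniteMeasure μn]
    (f : X → ℝ) (hf : Measurable f) (Cb : ℝ) (hb : ∀ x, |f x| ≤ Cb)
    (pr : Ω → X) (hpr : Measurable pr) (a b : ℝ) (ha : 0 ≤ a) (hb' : 0 ≤ b)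
    (hmap : P.map pr = ENNReal.ofReal a • μp + ENNReal.ofReal b • μn) :
    ∫ ω, f (pr ω) ∂P = a * ∫ x, f x ∂μp + b * ∫ x, f x ∂μn := by
  have hμ : Integrable f μp := aux_int_bdd _ f hf Cb hb
  have hν : Integrable f μn := aux_int_bdd _ f hf Cb hb
  calc ∫ ω, f (pr ω) ∂P = ∫ x, f x ∂(P.map pr) :=
        (integral_map hpr.aemeasurable hf.aestronglyMeasurable).symm
    _ = a * ∫ x, f x ∂μp + b * ∫ x, f x ∂μn := by
        rw [hmap]; exact aux_integral_two_smul μp μn a b ha hb' f hμ hν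

/-- For every `γ ∈ [0,1]` and all positive integers `nS, nD, n`, the convex combination
of the SD estimator and the Pcomp estimator is an unbiased estimator of the
classification risk. -/
theorem stmt3
    {X : Type*} [MeasurableSpace X]
    (μp μn : Measure X) [IsProbabilityMeasure μp] [IsProbabilityMeasure μn]
    (πp πn πS πD : ℝ) (hπ0 : 0 < πp) (hπ1 : πp < 1) (hπhalf : πp ≠ 1/2)
    (hπn : πn = 1 - πp) (hπS : πS = πp^2 + πn^2) (hπD : πD = 2*πp*πn)
    (Cℓ : ℝ) (hCℓ : 0 < Cℓ)
    (ℓ : ℝ → ℤ → ℝ)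
    (hℓbd : ∀ z : ℝ, ∀ t ∈ ({-1, 1} : Set ℤ), 0 ≤ ℓ z t ∧ ℓ z t ≤ Cℓ)
    (hℓmeas : ∀ t ∈ ({-1, 1} : Set ℤ), Measurable fun z => ℓ z t)
    (g : X → ℝ) (hg : Measurable g)
    (ptp ptn : Measure X) [IsProbabilityMeasure ptp] [IsProbabilityMeasure ptn]
    (hptp : ptp = ENNReal.ofReal (πp/(πp+πn^2)) • μp + ENNReal.ofReal (πn^2/(πp+πn^2)) • μn)
    (hptn : ptn = ENNReal.ofReal (πp^2/(πp^2+πn)) • μp + ENNReal.ofReal (πn/(πp^2+πn)) • μn)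
    (pS pD : Measure (X × X)) [IsProbabilityMeasure pS] [IsProbabilityMeasure pD]
    (hpS : pS = ENNReal.ofReal (πp^2/πS) • (μp.prod μp) + ENNReal.ofReal (πn^2/πS) • (μn.prod μn))
    (hpD : pD = ENNReal.ofReal (1/2) • (μp.prod μn) + ENNReal.ofReal (1/2) • (μn.prod μp))
    (L : ℝ → ℤ → ℝ)
    (hL : ∀ z t, L z t = (πp * ℓ z t - πn * ℓ z (-t)) / (πp - πn))
    (γ : ℝ) (hγ : γ ∈ Set.Icc (0:ℝ) 1)
    (nS nD n : ℕ) (hnS : 0 < nS) (hnD : 0 < nD) (hn : 0 < n) :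
    ∫ ω : (Fin nS → X × X) × (Fin nD → X × X) × (Fin n → X × X),
        (γ * ((πS/(nS : ℝ)) * ∑ i : Fin nS,
                (L (g (ω.1 i).1) 1 + L (g (ω.1 i).2) 1)/2
              + (πD/(nD : ℝ)) * ∑ i : Fin nD,
                (L (g (ω.2.1 i).1) (-1) + L (g (ω.2.1 i).2) (-1))/2)
          + (1-γ) * ((1/(n : ℝ)) * ∑ i : Fin n,
                (ℓ (g (ω.2.2 i).1) 1 - πp * ℓ (g (ω.2.2 i).1) (-1)
                  + ℓ (g (ω.2.2 i).2) (-1) - πn * ℓ (g (ω.2.2 i).2) 1)))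
      ∂((Measure.pi fun _ : Fin nS => pS).prod
          ((Measure.pi fun _ : Fin nD => pD).prod
            (Measure.pi fun _ : Fin n => ptp.prod ptn)))
      = πp * (∫ x, ℓ (g x) 1 ∂μp) + πn * (∫ x, ℓ (g x) (-1) ∂μn) := by
  classical
  have hπn0 : 0 < πn := by rw [hπn]; linarith
  have hπpn : πp - πn ≠ 0 := by
    rw [hπn]; intro h; apply hπhalf; linarith
  have hπS0 : 0 < πS := by rw [hπS]; positivity
  have hKp : 0 < πp + πn^2 := by positivity
  have hKn : 0 < πp^2 + πn := by positivity
  set P1 := Measure.pi (fun _ : Fin nS => pS) with hP1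
  set P2 := Measure.pi (fun _ : Fin nD => pD) with hP2
  set P3 := Measure.pi (fun _ : Fin n => ptp.prod ptn) with hP3
  set P := P1.prod (P2.prod P3) with hP
  haveI : IsProbabilityMeasure P1 := by rw [hP1]; infer_instance
  haveI : IsProbabilityMeasure P2 := by rw [hP2]; infer_instance
  haveI : IsProbabilityMeasure P3 := by rw [hP3]; infer_instance
  haveI : IsProbabilityMeasure P := by rw [hP]; infer_instance
  -- marginals of the pair measures
  have hpSf : pS.fst = ENNReal.ofReal (πp^2/πS) • μp + ENNReal.ofReal (πn^2/πS) • μn := by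
    rw [hpS, Measure.fst_add, aux_fst_smul, aux_fst_smul, Measure.fst_prod, Measure.fst_prod]
  have hpSs : pS.snd = ENNReal.ofReal (πp^2/πS) • μp + ENNReal.ofReal (πn^2/πS) • μn := by
    rw [hpS, Measure.snd_add, aux_snd_smul, aux_snd_smul, Measure.snd_prod, Measure.snd_prod]
  have hpDf : pD.fst = ENNReal.ofReal (1/2) • μp + ENNReal.ofReal (1/2) • μn := by
    rw [hpD, Measure.fst_add, aux_fst_smul, aux_fst_smul, Measure.fst_prod, Measure.fst_prod]
  have hpDs : pD.snd = ENNReal.ofReal (1/2) • μp + ENNReal.ofReal (1/2) • μn := by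
    rw [hpD, Measure.snd_add, aux_snd_smul, aux_snd_smul, Measure.snd_prod, Measure.snd_prod,
      add_comm]
  -- the coordinate maps of the sampling measure
  have hmapP1 : P.map Prod.fst = P1 := by rw [hP]; exact Measure.fst_prod
  have hmapP23 : P.map Prod.snd = P2.prod P3 := by rw [hP]; exact Measure.snd_prod
  have hmS1 : ∀ i : Fin nS, P.map (fun ω => (ω.1 i).1)
      = ENNReal.ofReal (πp^2/πS) • μp + ENNReal.ofReal (πn^2/πS) • μn := by
    intro i
    have e1 : ((P.map Prod.fst).map (fun η : Fin nS → X × X => η i)).map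
        (Prod.fst : X × X → X) = P.map (fun ω => (ω.1 i).1) := by
      rw [Measure.map_map (measurable_pi_apply i) measurable_fst,
        Measure.map_map measurable_fst ((measurable_pi_apply i).comp measurable_fst)]
      rfl
    rw [← e1, hmapP1, hP1, aux_map_eval]
    exact hpSf
  have hmS2 : ∀ i : Fin nS, P.map (fun ω => (ω.1 i).2)
      = ENNReal.ofReal (πp^2/πS) • μp + ENNReal.ofReal (πn^2/πS) • μn := by
    intro i
    have e1 : ((P.map Prod.fst).map (fun η : Fin nS → X × X => η i)).map
        (Prod.snd : X × X → X) = P.map (fun ω => (ω.1 i).2) := by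
      rw [Measure.map_map (measurable_pi_apply i) measurable_fst,
        Measure.map_map measurable_snd ((measurable_pi_apply i).comp measurable_fst)]
      rfl
    rw [← e1, hmapP1, hP1, aux_map_eval]
    exact hpSs
  have hmD1 : ∀ i : Fin nD, P.map (fun ω => (ω.2.1 i).1)
      = ENNReal.ofReal (1/2) • μp + ENNReal.ofReal (1/2) • μn := by
    intro i
    have e1 : (((P.map Prod.snd).map Prod.fst).map (fun η : Fin nD → X × X => η i)).map
        (Prod.fst : X × X → X) = P.map (fun ω => (ω.2.1 i).1) := by
      rw [Measure.map_map measurable_fst measurable_snd,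
        Measure.map_map (measurable_pi_apply i) (measurable_fst.comp measurable_snd),
        Measure.map_map measurable_fst
          ((measurable_pi_apply i).comp (measurable_fst.comp measurable_snd))]
      rfl
    rw [← e1, hmapP23, show (P2.prod P3).map Prod.fst = P2 from Measure.fst_prod,
      hP2, aux_map_eval]
    exact hpDf
  have hmD2 : ∀ i : Fin nD, P.map (fun ω => (ω.2.1 i).2)
      = ENNReal.ofReal (1/2) • μp + ENNReal.ofReal (1/2) • μn := by
    intro i
    have e1 : (((P.map Prod.snd).map Prod.fst).map (fun η : Fin nD → X × X => η i)).map
        (Prod.snd : X × X → X) = P.map (fun ω => (ω.2.1 i).2) := by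
      rw [Measure.map_map measurable_fst measurable_snd,
        Measure.map_map (measurable_pi_apply i) (measurable_fst.comp measurable_snd),
        Measure.map_map measurable_snd
          ((measurable_pi_apply i).comp (measurable_fst.comp measurable_snd))]
      rfl
    rw [← e1, hmapP23, show (P2.prod P3).map Prod.fst = P2 from Measure.fst_prod,
      hP2, aux_map_eval]
    exact hpDs
  have hmN1 : ∀ i : Fin n, P.map (fun ω => (ω.2.2 i).1)
      = ENNReal.ofReal (πp/(πp+πn^2)) • μp + ENNReal.ofReal (πn^2/(πp+πn^2)) • μn := by
    intro i
    have e1 : (((P.map Prod.snd).map Prod.snd).map (fun η : Fin n → X × X => η i)).map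
        (Prod.fst : X × X → X) = P.map (fun ω => (ω.2.2 i).1) := by
      rw [Measure.map_map measurable_snd measurable_snd,
        Measure.map_map (measurable_pi_apply i) (measurable_snd.comp measurable_snd),
        Measure.map_map measurable_fst
          ((measurable_pi_apply i).comp (measurable_snd.comp measurable_snd))]
      rfl
    rw [← e1, hmapP23, show (P2.prod P3).map Prod.snd = P3 from Measure.snd_prod,
      hP3, aux_map_eval, show (ptp.prod ptn).map Prod.fst = ptp from Measure.fst_prod, hptp]
  have hmN2 : ∀ i : Fin n, P.map (fun ω => (ω.2.2 i).2)
      = ENNReal.ofReal (πp^2/(πp^2+πn)) • μp + ENNReal.ofReal (πn/(πp^2+πn)) • μn := by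
    intro i
    have e1 : (((P.map Prod.snd).map Prod.snd).map (fun η : Fin n → X × X => η i)).map
        (Prod.snd : X × X → X) = P.map (fun ω => (ω.2.2 i).2) := by
      rw [Measure.map_map measurable_snd measurable_snd,
        Measure.map_map (measurable_pi_apply i) (measurable_snd.comp measurable_snd),
        Measure.map_map measurable_snd
          ((measurable_pi_apply i).comp (measurable_snd.comp measurable_snd))]
      rfl
    rw [← e1, hmapP23, show (P2.prod P3).map Prod.snd = P3 from Measure.snd_prod,
      hP3, aux_map_eval, show (ptp.prod ptn).map Prod.snd = ptn from Measure.snd_prod, hptn]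
  -- measurability and bounds of atomic functions
  have hmeas : ∀ t ∈ ({-1, 1} : Set ℤ), Measurable fun x : X => ℓ (g x) t :=
    fun t ht => (hℓmeas t ht).comp hg
  have hbd : ∀ t ∈ ({-1, 1} : Set ℤ), ∀ x : X, |ℓ (g x) t| ≤ Cℓ := by
    intro t ht x
    rcases hℓbd (g x) t ht with ⟨h1, h2⟩
    rw [abs_le]; constructor <;> linarith
  have mS1 : ∀ i : Fin nS,
      Measurable (fun ω : (Fin nS → X × X) × (Fin nD → X × X) × (Fin n → X × X) =>
        (ω.1 i).1) :=
    fun i => measurable_fst.comp ((measurable_pi_apply i).comp measurable_fst)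
  have mS2 : ∀ i : Fin nS,
      Measurable (fun ω : (Fin nS → X × X) × (Fin nD → X × X) × (Fin n → X × X) =>
        (ω.1 i).2) :=
    fun i => measurable_snd.comp ((measurable_pi_apply i).comp measurable_fst)
  have mD1 : ∀ i : Fin nD,
      Measurable (fun ω : (Fin nS → X × X) × (Fin nD → X × X) × (Fin n → X × X) =>
        (ω.2.1 i).1) :=
    fun i => measurable_fst.comp
      ((measurable_pi_apply i).comp (measurable_fst.comp measurable_snd))
  have mD2 : ∀ i : Fin nD,
      Measurable (fun ω : (Fin nS → X × X) × (Fin nD → X × X) × (Fin n → X × X) =>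
        (ω.2.1 i).2) :=
    fun i => measurable_snd.comp
      ((measurable_pi_apply i).comp (measurable_fst.comp measurable_snd))
  have mN1 : ∀ i : Fin n,
      Measurable (fun ω : (Fin nS → X × X) × (Fin nD → X × X) × (Fin n → X × X) =>
        (ω.2.2 i).1) :=
    fun i => measurable_fst.comp
      ((measurable_pi_apply i).comp (measurable_snd.comp measurable_snd))
  have mN2 : ∀ i : Fin n,
      Measurable (fun ω : (Fin nS → X × X) × (Fin nD → X × X) × (Fin n → X × X) =>
        (ω.2.2 i).2) :=
    fun i => measurable_snd.comp
      ((measurable_pi_apply i).comp (measurable_snd.comp measurable_snd))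
  -- integrability of atoms over P
  have iInt : ∀ (pr : (Fin nS → X × X) × (Fin nD → X × X) × (Fin n → X × X) → X),
      Measurable pr → ∀ t ∈ ({-1, 1} : Set ℤ),
      Integrable (fun ω => ℓ (g (pr ω)) t) P := by
    intro pr hpr t ht
    exact aux_int_bdd P _ ((hℓmeas t ht).comp (hg.comp hpr)) Cℓ
      (fun ω => hbd t ht (pr ω))
  have iLc : ∀ (pr : (Fin nS → X × X) × (Fin nD → X × X) × (Fin n → X × X) → X),
      Measurable pr → ∀ t ∈ ({-1, 1} : Set ℤ), ∀ s ∈ ({-1, 1} : Set ℤ),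
      Integrable (fun ω => (πp * ℓ (g (pr ω)) t - πn * ℓ (g (pr ω)) s) / (πp - πn)) P := by
    intro pr hpr t ht s hs
    exact (((iInt pr hpr t ht).const_mul πp).sub
      ((iInt pr hpr s hs).const_mul πn)).div_const _
  -- abbreviations for the four basic integrals
  set A := ∫ x, ℓ (g x) 1 ∂μp with hA
  set B := ∫ x, ℓ (g x) (-1) ∂μp with hB
  set Cc := ∫ x, ℓ (g x) 1 ∂μn with hCc
  set D := ∫ x, ℓ (g x) (-1) ∂μn with hD
  have c1 : (0:ℝ) ≤ πp^2/πS := by positivity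
  have c2 : (0:ℝ) ≤ πn^2/πS := by positivity
  have c3 : (0:ℝ) ≤ 1/2 := by norm_num
  have c4 : (0:ℝ) ≤ πp/(πp+πn^2) := by positivity
  have c5 : (0:ℝ) ≤ πn^2/(πp+πn^2) := by positivity
  have c6 : (0:ℝ) ≤ πp^2/(πp^2+πn) := by positivity
  have c7 : (0:ℝ) ≤ πn/(πp^2+πn) := by positivity
  -- atomic integral computations
  have hiS1p : ∀ i : Fin nS, ∫ ω, ℓ (g ((ω.1 i).1)) 1 ∂P = (πp^2/πS) * A + (πn^2/πS) * Cc :=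
    fun i => aux_key P μp μn _ (hmeas 1 (by simp)) Cℓ (hbd 1 (by simp)) _ (mS1 i)
      _ _ c1 c2 (hmS1 i)
  have hiS1n : ∀ i : Fin nS, ∫ ω, ℓ (g ((ω.1 i).1)) (-1) ∂P = (πp^2/πS) * B + (πn^2/πS) * D :=
    fun i => aux_key P μp μn _ (hmeas (-1) (by simp)) Cℓ (hbd (-1) (by simp)) _ (mS1 i)
      _ _ c1 c2 (hmS1 i)
  have hiS2p : ∀ i : Fin nS, ∫ ω, ℓ (g ((ω.1 i).2)) 1 ∂P = (πp^2/πS) * A + (πn^2/πS) * Cc :=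
    fun i => aux_key P μp μn _ (hmeas 1 (by simp)) Cℓ (hbd 1 (by simp)) _ (mS2 i)
      _ _ c1 c2 (hmS2 i)
  have hiS2n : ∀ i : Fin nS, ∫ ω, ℓ (g ((ω.1 i).2)) (-1) ∂P = (πp^2/πS) * B + (πn^2/πS) * D :=
    fun i => aux_key P μp μn _ (hmeas (-1) (by simp)) Cℓ (hbd (-1) (by simp)) _ (mS2 i)
      _ _ c1 c2 (hmS2 i)
  have hiD1p : ∀ i : Fin nD, ∫ ω, ℓ (g ((ω.2.1 i).1)) 1 ∂P = (1/2) * A + (1/2) * Cc :=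
    fun i => aux_key P μp μn _ (hmeas 1 (by simp)) Cℓ (hbd 1 (by simp)) _ (mD1 i)
      _ _ c3 c3 (hmD1 i)
  have hiD1n : ∀ i : Fin nD, ∫ ω, ℓ (g ((ω.2.1 i).1)) (-1) ∂P = (1/2) * B + (1/2) * D :=
    fun i => aux_key P μp μn _ (hmeas (-1) (by simp)) Cℓ (hbd (-1) (by simp)) _ (mD1 i)
      _ _ c3 c3 (hmD1 i)
  have hiD2p : ∀ i : Fin nD, ∫ ω, ℓ (g ((ω.2.1 i).2)) 1 ∂P = (1/2) * A + (1/2) * Cc :=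
    fun i => aux_key P μp μn _ (hmeas 1 (by simp)) Cℓ (hbd 1 (by simp)) _ (mD2 i)
      _ _ c3 c3 (hmD2 i)
  have hiD2n : ∀ i : Fin nD, ∫ ω, ℓ (g ((ω.2.1 i).2)) (-1) ∂P = (1/2) * B + (1/2) * D :=
    fun i => aux_key P μp μn _ (hmeas (-1) (by simp)) Cℓ (hbd (-1) (by simp)) _ (mD2 i)
      _ _ c3 c3 (hmD2 i)
  have hiN1p : ∀ i : Fin n, ∫ ω, ℓ (g ((ω.2.2 i).1)) 1 ∂P
      = (πp/(πp+πn^2)) * A + (πn^2/(πp+πn^2)) * Cc :=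
    fun i => aux_key P μp μn _ (hmeas 1 (by simp)) Cℓ (hbd 1 (by simp)) _ (mN1 i)
      _ _ c4 c5 (hmN1 i)
  have hiN1n : ∀ i : Fin n, ∫ ω, ℓ (g ((ω.2.2 i).1)) (-1) ∂P
      = (πp/(πp+πn^2)) * B + (πn^2/(πp+πn^2)) * D :=
    fun i => aux_key P μp μn _ (hmeas (-1) (by simp)) Cℓ (hbd (-1) (by simp)) _ (mN1 i)
      _ _ c4 c5 (hmN1 i)
  have hiN2p : ∀ i : Fin n, ∫ ω, ℓ (g ((ω.2.2 i).2)) 1 ∂P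
      = (πp^2/(πp^2+πn)) * A + (πn/(πp^2+πn)) * Cc :=
    fun i => aux_key P μp μn _ (hmeas 1 (by simp)) Cℓ (hbd 1 (by simp)) _ (mN2 i)
      _ _ c6 c7 (hmN2 i)
  have hiN2n : ∀ i : Fin n, ∫ ω, ℓ (g ((ω.2.2 i).2)) (-1) ∂P
      = (πp^2/(πp^2+πn)) * B + (πn/(πp^2+πn)) * D :=
    fun i => aux_key P μp μn _ (hmeas (-1) (by simp)) Cℓ (hbd (-1) (by simp)) _ (mN2 i)
      _ _ c6 c7 (hmN2 i)
  -- per-coordinate integrals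
  have hvalS : ∀ i : Fin nS,
      ∫ ω, ((πp * ℓ (g ((ω.1 i).1)) 1 - πn * ℓ (g ((ω.1 i).1)) (-1)) / (πp - πn)
        + (πp * ℓ (g ((ω.1 i).2)) 1 - πn * ℓ (g ((ω.1 i).2)) (-1)) / (πp - πn)) / 2 ∂P
      = (πp * ((πp^2/πS) * A + (πn^2/πS) * Cc)
          - πn * ((πp^2/πS) * B + (πn^2/πS) * D)) / (πp - πn) := by
    intro i
    rw [integral_div,
      integral_add (iLc _ (mS1 i) 1 (by simp) (-1) (by simp))
        (iLc _ (mS2 i) 1 (by simp) (-1) (by simp)),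
      integral_div, integral_div,
      integral_sub ((iInt _ (mS1 i) 1 (by simp)).const_mul πp)
        ((iInt _ (mS1 i) (-1) (by simp)).const_mul πn),
      integral_sub ((iInt _ (mS2 i) 1 (by simp)).const_mul πp)
        ((iInt _ (mS2 i) (-1) (by simp)).const_mul πn),
      integral_const_mul, integral_const_mul, integral_const_mul, integral_const_mul,
      hiS1p i, hiS1n i, hiS2p i, hiS2n i]
    ring
  have hvalD : ∀ i : Fin nD,
      ∫ ω, ((πp * ℓ (g ((ω.2.1 i).1)) (-1) - πn * ℓ (g ((ω.2.1 i).1)) 1) / (πp - πn)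
        + (πp * ℓ (g ((ω.2.1 i).2)) (-1) - πn * ℓ (g ((ω.2.1 i).2)) 1) / (πp - πn)) / 2 ∂P
      = (πp * ((1/2) * B + (1/2) * D) - πn * ((1/2) * A + (1/2) * Cc)) / (πp - πn) := by
    intro i
    rw [integral_div,
      integral_add (iLc _ (mD1 i) (-1) (by simp) 1 (by simp))
        (iLc _ (mD2 i) (-1) (by simp) 1 (by simp)),
      integral_div, integral_div,
      integral_sub ((iInt _ (mD1 i) (-1) (by simp)).const_mul πp)
        ((iInt _ (mD1 i) 1 (by simp)).const_mul πn),
      integral_sub ((iInt _ (mD2 i) (-1) (by simp)).const_mul πp)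
        ((iInt _ (mD2 i) 1 (by simp)).const_mul πn),
      integral_const_mul, integral_const_mul, integral_const_mul, integral_const_mul,
      hiD1p i, hiD1n i, hiD2p i, hiD2n i]
    ring
  have iN1 : ∀ i : Fin n, Integrable (fun ω =>
      ℓ (g ((ω.2.2 i).1)) 1 - πp * ℓ (g ((ω.2.2 i).1)) (-1)) P :=
    fun i => (iInt _ (mN1 i) 1 (by simp)).sub
      ((iInt _ (mN1 i) (-1) (by simp)).const_mul πp)
  have iN2 : ∀ i : Fin n, Integrable (fun ω =>
      ℓ (g ((ω.2.2 i).1)) 1 - πp * ℓ (g ((ω.2.2 i).1)) (-1)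
        + ℓ (g ((ω.2.2 i).2)) (-1)) P :=
    fun i => (iN1 i).add (iInt _ (mN2 i) (-1) (by simp))
  have hvalN : ∀ i : Fin n,
      ∫ ω, (ℓ (g ((ω.2.2 i).1)) 1 - πp * ℓ (g ((ω.2.2 i).1)) (-1)
        + ℓ (g ((ω.2.2 i).2)) (-1) - πn * ℓ (g ((ω.2.2 i).2)) 1) ∂P
      = ((πp/(πp+πn^2)) * A + (πn^2/(πp+πn^2)) * Cc)
        - πp * ((πp/(πp+πn^2)) * B + (πn^2/(πp+πn^2)) * D)
        + ((πp^2/(πp^2+πn)) * B + (πn/(πp^2+πn)) * D)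
        - πn * ((πp^2/(πp^2+πn)) * A + (πn/(πp^2+πn)) * Cc) := by
    intro i
    rw [integral_sub (iN2 i) ((iInt _ (mN2 i) 1 (by simp)).const_mul πn),
      integral_add (iN1 i) (iInt _ (mN2 i) (-1) (by simp)),
      integral_sub (iInt _ (mN1 i) 1 (by simp))
        ((iInt _ (mN1 i) (-1) (by simp)).const_mul πp),
      integral_const_mul, integral_const_mul,
      hiN1p i, hiN1n i, hiN2p i, hiN2n i]
  -- integrability of the estimator pieces
  have intS : ∀ i : Fin nS, Integrable (fun ω =>
      ((πp * ℓ (g ((ω.1 i).1)) 1 - πn * ℓ (g ((ω.1 i).1)) (-1)) / (πp - πn)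
        + (πp * ℓ (g ((ω.1 i).2)) 1 - πn * ℓ (g ((ω.1 i).2)) (-1)) / (πp - πn)) / 2) P :=
    fun i => ((iLc _ (mS1 i) 1 (by simp) (-1) (by simp)).add
      (iLc _ (mS2 i) 1 (by simp) (-1) (by simp))).div_const _
  have intD : ∀ i : Fin nD, Integrable (fun ω =>
      ((πp * ℓ (g ((ω.2.1 i).1)) (-1) - πn * ℓ (g ((ω.2.1 i).1)) 1) / (πp - πn)
        + (πp * ℓ (g ((ω.2.1 i).2)) (-1) - πn * ℓ (g ((ω.2.1 i).2)) 1) / (πp - πn)) / 2) P :=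
    fun i => ((iLc _ (mD1 i) (-1) (by simp) 1 (by simp)).add
      (iLc _ (mD2 i) (-1) (by simp) 1 (by simp))).div_const _
  have intN : ∀ i : Fin n, Integrable (fun ω =>
      ℓ (g ((ω.2.2 i).1)) 1 - πp * ℓ (g ((ω.2.2 i).1)) (-1)
        + ℓ (g ((ω.2.2 i).2)) (-1) - πn * ℓ (g ((ω.2.2 i).2)) 1) P :=
    fun i => (iN2 i).sub ((iInt _ (mN2 i) 1 (by simp)).const_mul πn)
  have intSsum : Integrable (fun ω => ∑ i : Fin nS,
      ((πp * ℓ (g ((ω.1 i).1)) 1 - πn * ℓ (g ((ω.1 i).1)) (-1)) / (πp - πn)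
        + (πp * ℓ (g ((ω.1 i).2)) 1 - πn * ℓ (g ((ω.1 i).2)) (-1)) / (πp - πn)) / 2) P :=
    integrable_finset_sum _ (fun i _ => intS i)
  have intDsum : Integrable (fun ω => ∑ i : Fin nD,
      ((πp * ℓ (g ((ω.2.1 i).1)) (-1) - πn * ℓ (g ((ω.2.1 i).1)) 1) / (πp - πn)
        + (πp * ℓ (g ((ω.2.1 i).2)) (-1) - πn * ℓ (g ((ω.2.1 i).2)) 1) / (πp - πn)) / 2) P :=
    integrable_finset_sum _ (fun i _ => intD i)
  have intNsum : Integrable (fun ω => ∑ i : Fin n,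
      (ℓ (g ((ω.2.2 i).1)) 1 - πp * ℓ (g ((ω.2.2 i).1)) (-1)
        + ℓ (g ((ω.2.2 i).2)) (-1) - πn * ℓ (g ((ω.2.2 i).2)) 1)) P :=
    integrable_finset_sum _ (fun i _ => intN i)
  have intE1a : Integrable (fun ω => (πS/(nS:ℝ)) * ∑ i : Fin nS,
      ((πp * ℓ (g ((ω.1 i).1)) 1 - πn * ℓ (g ((ω.1 i).1)) (-1)) / (πp - πn)
        + (πp * ℓ (g ((ω.1 i).2)) 1 - πn * ℓ (g ((ω.1 i).2)) (-1)) / (πp - πn)) / 2) P :=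
    intSsum.const_mul _
  have intE1b : Integrable (fun ω => (πD/(nD:ℝ)) * ∑ i : Fin nD,
      ((πp * ℓ (g ((ω.2.1 i).1)) (-1) - πn * ℓ (g ((ω.2.1 i).1)) 1) / (πp - πn)
        + (πp * ℓ (g ((ω.2.1 i).2)) (-1) - πn * ℓ (g ((ω.2.1 i).2)) 1) / (πp - πn)) / 2) P :=
    intDsum.const_mul _
  have intE2 : Integrable (fun ω => (1/(n:ℝ)) * ∑ i : Fin n,
      (ℓ (g ((ω.2.2 i).1)) 1 - πp * ℓ (g ((ω.2.2 i).1)) (-1)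
        + ℓ (g ((ω.2.2 i).2)) (-1) - πn * ℓ (g ((ω.2.2 i).2)) 1)) P :=
    intNsum.const_mul _
  have intγ1 : Integrable (fun ω => γ * ((πS/(nS:ℝ)) * (∑ i : Fin nS,
      ((πp * ℓ (g ((ω.1 i).1)) 1 - πn * ℓ (g ((ω.1 i).1)) (-1)) / (πp - πn)
        + (πp * ℓ (g ((ω.1 i).2)) 1 - πn * ℓ (g ((ω.1 i).2)) (-1)) / (πp - πn)) / 2)
      + (πD/(nD:ℝ)) * (∑ i : Fin nD,
      ((πp * ℓ (g ((ω.2.1 i).1)) (-1) - πn * ℓ (g ((ω.2.1 i).1)) 1) / (πp - πn)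
        + (πp * ℓ (g ((ω.2.1 i).2)) (-1) - πn * ℓ (g ((ω.2.1 i).2)) 1) / (πp - πn)) / 2))) P :=
    (intE1a.add intE1b).const_mul _
  have intγ2 : Integrable (fun ω => (1-γ) * ((1/(n:ℝ)) * ∑ i : Fin n,
      (ℓ (g ((ω.2.2 i).1)) 1 - πp * ℓ (g ((ω.2.2 i).1)) (-1)
        + ℓ (g ((ω.2.2 i).2)) (-1) - πn * ℓ (g ((ω.2.2 i).2)) 1))) P :=
    intE2.const_mul _
  simp only [hL, neg_neg]
  rw [integral_add intγ1 intγ2, integral_const_mul, integral_const_mul,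
    integral_add intE1a intE1b, integral_const_mul, integral_const_mul, integral_const_mul,
    integral_finset_sum _ (fun i _ => intS i),
    integral_finset_sum _ (fun i _ => intD i),
    integral_finset_sum _ (fun i _ => intN i)]
  simp only [hvalS, hvalD, hvalN, Finset.sum_const, Finset.card_univ, Fintype.card_fin,
    nsmul_eq_mul]
  have hnS' : (nS:ℝ) ≠ 0 := Nat.cast_ne_zero.mpr hnS.ne'
  have hnD' : (nD:ℝ) ≠ 0 := Nat.cast_ne_zero.mpr hnD.ne'
  have hn' : (n:ℝ) ≠ 0 := Nat.cast_ne_zero.mpr hn.ne'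
  clear hvalS hvalD hvalN intγ1 intγ2 intE1a intE1b intE2 intSsum intDsum intNsum
    intS intD intN iN1 iN2 iLc iInt hiS1p hiS1n hiS2p hiS2n hiD1p hiD1n hiD2p hiD2n
    hiN1p hiN1n hiN2p hiN2n hmS1 hmS2 hmD1 hmD2 hmN1 hmN2 mS1 mS2 mD1 mD2 mN1 mN2
    hmeas hbd hpSf hpSs hpDf hpDs hmapP1 hmapP23 hptp hptn hpS hpD hL hℓbd hℓmeas
  have e1 : ∀ k : ℝ, k ≠ 0 → ∀ c v : ℝ, c/k * (k * v) = c * v := by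
    intro k hk c v
    field_simp
  rw [e1 _ hnS', e1 _ hnD', e1 _ hn', one_mul]
  have hSD : πS * ((πp * ((πp^2/πS) * A + (πn^2/πS) * Cc)
        - πn * ((πp^2/πS) * B + (πn^2/πS) * D)) / (πp - πn))
      + πD * ((πp * ((1/2) * B + (1/2) * D) - πn * ((1/2) * A + (1/2) * Cc)) / (πp - πn))
      = πp * A + πn * D := by
    have hS0 : πS ≠ 0 := ne_of_gt hπS0
    subst hπn hπS hπD
    field_simp
    ring
  have hN : ((πp/(πp+πn^2)) * A + (πn^2/(πp+πn^2)) * Cc)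
        - πp * ((πp/(πp+πn^2)) * B + (πn^2/(πp+πn^2)) * D)
        + ((πp^2/(πp^2+πn)) * B + (πn/(πp^2+πn)) * D)
        - πn * ((πp^2/(πp^2+πn)) * A + (πn/(πp^2+πn)) * Cc)
      = πp * A + πn * D := by
    have hp0 : πp + πn^2 ≠ 0 := ne_of_gt hKp
    have hn0 : πp^2 + πn ≠ 0 := ne_of_gt hKn
    subst hπn
    field_simp
    ring
  rw [hSD, hN]
  ring
end

section
/- The population Pcomp risk equals the classification risk: ∫(ℓ₊ − π₊ℓ₋) dp̃₊ + ∫(ℓ₋ − π₋ℓ₊) dp̃₋ = R(g). -/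
open MeasureTheory

/-- The population Pcomp risk equals the classification risk. -/
theorem stmt4
    {X : Type*} [MeasurableSpace X]
    (μp μn : Measure X) [IsProbabilityMeasure μp] [IsProbabilityMeasure μn]
    (πp πn : ℝ) (hπ0 : 0 < πp) (hπ1 : πp < 1) (hπn : πn = 1 - πp)
    (Cℓ : ℝ) (hCℓ : 0 < Cℓ)
    (ℓ : ℝ → ℤ → ℝ)
    (hℓbd : ∀ z : ℝ, ∀ t ∈ ({-1, 1} : Set ℤ), 0 ≤ ℓ z t ∧ ℓ z t ≤ Cℓ)
    (hℓmeas : ∀ t ∈ ({-1, 1} : Set ℤ), Measurable fun z => ℓ z t)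
    (g : X → ℝ) (hg : Measurable g)
    (ptp ptn : Measure X)
    (hptp : ptp = ENNReal.ofReal (πp/(πp+πn^2)) • μp + ENNReal.ofReal (πn^2/(πp+πn^2)) • μn)
    (hptn : ptn = ENNReal.ofReal (πp^2/(πp^2+πn)) • μp + ENNReal.ofReal (πn/(πp^2+πn)) • μn) :
    (∫ x, (ℓ (g x) 1 - πp * ℓ (g x) (-1)) ∂ptp)
      + (∫ x, (ℓ (g x) (-1) - πn * ℓ (g x) 1) ∂ptn)
      = πp * (∫ x, ℓ (g x) 1 ∂μp) + πn * (∫ x, ℓ (g x) (-1) ∂μn) := by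
  have h1 : (1 : ℤ) ∈ ({-1, 1} : Set ℤ) := by simp
  have hm1 : (-1 : ℤ) ∈ ({-1, 1} : Set ℤ) := by simp
  -- integrability of ℓ (g x) t wrt any probability measure
  have hint : ∀ t ∈ ({-1, 1} : Set ℤ), ∀ (μ : Measure X), IsProbabilityMeasure μ →
      Integrable (fun x => ℓ (g x) t) μ := by
    intro t ht μ hμ
    refine Integrable.mono' (integrable_const Cℓ)
      (((hℓmeas t ht).comp hg).aestronglyMeasurable) ?_
    filter_upwards with x
    rw [Real.norm_eq_abs, abs_le]
    have := hℓbd (g x) t ht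
    constructor <;> linarith [this.1, this.2]
  have hip : Integrable (fun x => ℓ (g x) 1) μp := hint 1 h1 μp inferInstance
  have hin : Integrable (fun x => ℓ (g x) 1) μn := hint 1 h1 μn inferInstance
  have hip' : Integrable (fun x => ℓ (g x) (-1)) μp := hint (-1) hm1 μp inferInstance
  have hin' : Integrable (fun x => ℓ (g x) (-1)) μn := hint (-1) hm1 μn inferInstance
  have hD : 0 < πp ^ 2 - πp + 1 := by nlinarith
  have hDp : πp + πn ^ 2 = πp ^ 2 - πp + 1 := by rw [hπn]; ring
  have hDn : πp ^ 2 + πn = πp ^ 2 - πp + 1 := by rw [hπn]; ring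
  set D := πp ^ 2 - πp + 1 with hDdef
  have hπnpos : 0 < πn := by rw [hπn]; linarith
  have ha : 0 ≤ πp / (πp + πn ^ 2) := by positivity
  have hb : 0 ≤ πn ^ 2 / (πp + πn ^ 2) := by positivity
  have hc : 0 ≤ πp ^ 2 / (πp ^ 2 + πn) := by positivity
  have hd : 0 ≤ πn / (πp ^ 2 + πn) := by positivity
  -- expand the integrals over the mixture measures
  have key : ∀ (F : X → ℝ), Integrable F μp → Integrable F μn → ∀ (a b : ℝ), 0 ≤ a → 0 ≤ b →
      ∫ x, F x ∂(ENNReal.ofReal a • μp + ENNReal.ofReal b • μn)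
        = a * ∫ x, F x ∂μp + b * ∫ x, F x ∂μn := by
    intro F hFp hFn a b ha hb
    rw [integral_add_measure (hFp.smul_measure ENNReal.ofReal_ne_top)
        (hFn.smul_measure ENNReal.ofReal_ne_top),
      integral_smul_measure, integral_smul_measure,
      ENNReal.toReal_ofReal ha, ENNReal.toReal_ofReal hb, smul_eq_mul, smul_eq_mul]
  have hFp : Integrable (fun x => ℓ (g x) 1 - πp * ℓ (g x) (-1)) μp :=
    hip.sub (hip'.const_mul πp)
  have hFn : Integrable (fun x => ℓ (g x) 1 - πp * ℓ (g x) (-1)) μn :=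
    hin.sub (hin'.const_mul πp)
  have hGp : Integrable (fun x => ℓ (g x) (-1) - πn * ℓ (g x) 1) μp :=
    hip'.sub (hip.const_mul πn)
  have hGn : Integrable (fun x => ℓ (g x) (-1) - πn * ℓ (g x) 1) μn :=
    hin'.sub (hin.const_mul πn)
  rw [hptp, hptn, key _ hFp hFn _ _ ha hb, key _ hGp hGn _ _ hc hd]
  have e1 : ∫ x, (ℓ (g x) 1 - πp * ℓ (g x) (-1)) ∂μp
      = (∫ x, ℓ (g x) 1 ∂μp) - πp * ∫ x, ℓ (g x) (-1) ∂μp := by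
    rw [integral_sub hip (hip'.const_mul πp), integral_const_mul]
  have e2 : ∫ x, (ℓ (g x) 1 - πp * ℓ (g x) (-1)) ∂μn
      = (∫ x, ℓ (g x) 1 ∂μn) - πp * ∫ x, ℓ (g x) (-1) ∂μn := by
    rw [integral_sub hin (hin'.const_mul πp), integral_const_mul]
  have e3 : ∫ x, (ℓ (g x) (-1) - πn * ℓ (g x) 1) ∂μp
      = (∫ x, ℓ (g x) (-1) ∂μp) - πn * ∫ x, ℓ (g x) 1 ∂μp := by
    rw [integral_sub hip' (hip.const_mul πn), integral_const_mul]
  have e4 : ∫ x, (ℓ (g x) (-1) - πn * ℓ (g x) 1) ∂μn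
      = (∫ x, ℓ (g x) (-1) ∂μn) - πn * ∫ x, ℓ (g x) 1 ∂μn := by
    rw [integral_sub hin' (hin.const_mul πn), integral_const_mul]
  rw [e1, e2, e3, e4, hDp, hDn]
  have hπn' : πn = 1 - πp := hπn
  field_simp
  rw [hπn']
  ring
end

section
/- The class-conditional distributions can be recovered from the Pcomp marginals: as measures on X one has p̃₊ = π₊•μ₊ + π₋•p̃₋ and p̃₋ = π₋•μ₋ + π₊•p̃₊ (equivalently, π₊∫f dμ₊ = ∫f dp̃₊ − π₋∫f dp̃₋ and π₋∫f dμ₋ = ∫f dp̃₋ − π₊∫f dp̃₊ for every bounded measurable f : X → ℝ). -/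
open MeasureTheory

/-- The class-conditional distributions can be recovered from the Pcomp marginals:
`p̃₊ = π₊•μ₊ + π₋•p̃₋` and `p̃₋ = π₋•μ₋ + π₊•p̃₊`, and equivalently the corresponding
integral identities hold for every bounded measurable real-valued function. -/
theorem stmt5
    {X : Type*} [MeasurableSpace X]
    (μp μn : Measure X) [IsProbabilityMeasure μp] [IsProbabilityMeasure μn]
    (πp πn : ℝ) (hπ0 : 0 < πp) (hπ1 : πp < 1) (hπn : πn = 1 - πp)
    (ptp ptn : Measure X)
    (hptp : ptp = ENNReal.ofReal (πp/(πp+πn^2)) • μp + ENNReal.ofReal (πn^2/(πp+πn^2)) • μn)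
    (hptn : ptn = ENNReal.ofReal (πp^2/(πp^2+πn)) • μp + ENNReal.ofReal (πn/(πp^2+πn)) • μn) :
    ptp = ENNReal.ofReal πp • μp + ENNReal.ofReal πn • ptn
    ∧ ptn = ENNReal.ofReal πn • μn + ENNReal.ofReal πp • ptp
    ∧ (∀ f : X → ℝ, Measurable f → (∃ C : ℝ, ∀ x, |f x| ≤ C) →
        πp * (∫ x, f x ∂μp) = (∫ x, f x ∂ptp) - πn * (∫ x, f x ∂ptn)
        ∧ πn * (∫ x, f x ∂μn) = (∫ x, f x ∂ptn) - πp * (∫ x, f x ∂ptp)) := by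
  subst hπn
  set πn := 1 - πp with hπn
  have hπn0 : 0 ≤ πn := by simp [hπn]; linarith
  have hD : 0 < πp + πn^2 := by positivity
  have hD2 : πp^2 + πn = πp + πn^2 := by rw [hπn]; ring
  have hDne : πp + πn^2 ≠ 0 := hD.ne'
  -- real coefficient identities
  have e1 : πp/(πp+πn^2) = πp + πn*(πp^2/(πp^2+πn)) := by
    rw [hD2]; field_simp; rw [hπn]; ring
  have e2 : πn^2/(πp+πn^2) = πn*(πn/(πp^2+πn)) := by
    rw [hD2]; field_simp
  have e3 : πp^2/(πp^2+πn) = πp*(πp/(πp+πn^2)) := by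
    rw [hD2]; field_simp
  have e4 : πn/(πp^2+πn) = πn + πp*(πn^2/(πp+πn^2)) := by
    rw [hD2]; field_simp; rw [hπn]; ring
  -- ENNReal coefficient identities
  have c1 : ENNReal.ofReal (πp/(πp+πn^2))
      = ENNReal.ofReal πp + ENNReal.ofReal πn * ENNReal.ofReal (πp^2/(πp^2+πn)) := by
    rw [← ENNReal.ofReal_mul hπn0, ← ENNReal.ofReal_add hπ0.le (by positivity)]
    exact congrArg _ e1
  have c2 : ENNReal.ofReal (πn^2/(πp+πn^2))
      = ENNReal.ofReal πn * ENNReal.ofReal (πn/(πp^2+πn)) := by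
    rw [← ENNReal.ofReal_mul hπn0]; exact congrArg _ e2
  have c3 : ENNReal.ofReal (πp^2/(πp^2+πn))
      = ENNReal.ofReal πp * ENNReal.ofReal (πp/(πp+πn^2)) := by
    rw [← ENNReal.ofReal_mul hπ0.le]; exact congrArg _ e3
  have c4 : ENNReal.ofReal (πn/(πp^2+πn))
      = ENNReal.ofReal πn + ENNReal.ofReal πp * ENNReal.ofReal (πn^2/(πp+πn^2)) := by
    rw [← ENNReal.ofReal_mul hπ0.le, ← ENNReal.ofReal_add hπn0 (by positivity)]
    exact congrArg _ e4
  have key1 : ptp = ENNReal.ofReal πp • μp + ENNReal.ofReal πn • ptn := by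
    rw [hptp, hptn, smul_add, smul_smul, smul_smul, c1, c2, add_smul]
    abel
  have key2 : ptn = ENNReal.ofReal πn • μn + ENNReal.ofReal πp • ptp := by
    rw [hptn, hptp, smul_add, smul_smul, smul_smul, c3, c4, add_smul]
    abel
  refine ⟨key1, key2, ?_⟩
  intro f hf ⟨C, hC⟩
  haveI fin_p : IsFiniteMeasure ptp := by
    constructor
    rw [hptp]
    simp [measure_univ]
  haveI fin_n : IsFiniteMeasure ptn := by
    constructor
    rw [hptn]
    simp [measure_univ]
  have hint : ∀ (μ : Measure X), IsFiniteMeasure μ → Integrable f μ := by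
    intro μ hμ
    exact ⟨hf.aestronglyMeasurable,
      HasFiniteIntegral.of_bounded (C := C)
        (Filter.Eventually.of_forall fun x => by simpa [Real.norm_eq_abs] using hC x)⟩
  have i1 : (∫ x, f x ∂ptp) = πp * (∫ x, f x ∂μp) + πn * (∫ x, f x ∂ptn) := by
    rw [key1, integral_add_measure
      (((hint μp inferInstance).smul_measure ENNReal.ofReal_ne_top))
      (((hint ptn fin_n).smul_measure ENNReal.ofReal_ne_top)),
      integral_smul_measure, integral_smul_measure,
      ENNReal.toReal_ofReal hπ0.le, ENNReal.toReal_ofReal hπn0]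
    simp [smul_eq_mul]
  have i2 : (∫ x, f x ∂ptn) = πn * (∫ x, f x ∂μn) + πp * (∫ x, f x ∂ptp) := by
    rw [key2, integral_add_measure
      (((hint μn inferInstance).smul_measure ENNReal.ofReal_ne_top))
      (((hint ptp fin_p).smul_measure ENNReal.ofReal_ne_top)),
      integral_smul_measure, integral_smul_measure,
      ENNReal.toReal_ofReal hπn0, ENNReal.toReal_ofReal hπ0.le]
    simp [smul_eq_mul]
  constructor <;> linarith
end

section
/- Define the noisy similar SD-Pcomp risk R̄_{S-PC}(g) = [π_S(1−ρ_S)/((π_S(1−ρ_S)+π_Dρ_D)(π₊−π₋))]·[π₊²∫(π₊ℓ₊−π₋ℓ₋) dp̄₊ + π₋²∫(π₊ℓ₊−π₋ℓ₋) dp̄₋] + [π_Sρ_D/((π_S(1−ρ_S)+π_Dρ_D)(π₊−π₋))]·[∫(π₊(π₋−π₊²)ℓ₊+π₋(π₊²−π₋)ℓ₋) dp̄₊ + ∫(π₊(π₊−π₋²)ℓ₊+π₋(π₋²−π₊)ℓ₋) dp̄₋]. Then R̄_{S-PC}(g) = C_S·R_{S-PC}(g) + R₁^S(g) + R₂^S(g)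 + R₃^S(g), where C_S = π_S(1−ρ_S)(1−ρ_C)/(π_S(1−ρ_S)+π_Dρ_D), R₁^S(g) = [π_S(1−ρ_S)ρ_C/((π_S(1−ρ_S)+π_Dρ_D)(π₊−π₋))]·[π₋²∫(π₊ℓ₊−π₋ℓ₋) dp̃₊ + π₊²∫(π₊ℓ₊−π₋ℓ₋) dp̃₋], R₂^S(g) = [π_Sρ_D(1−ρ_C)/((π_S(1−ρ_S)+π_Dρ_D)(π₊−π₋))]·[∫(π₊(π₋−π₊²)ℓ₊+π₋(π₊²−π₋)ℓ₋) dp̃₊ + ∫(π₊(π₊−π₋²)ℓ₊+π₋(π₋²−π₊)ℓ₋) dp̃₋], and R₃^S(g) = [π_Sρ_Dρ_C/((π_S(1−ρ_S)+π_Dρ_D)(π₊−π₋))]·[∫(π₊(π₊−π₋²)ℓ₊+π₋(π₋²−π₊)ℓ₋) dp̃₊ + ∫(π₊(π₋−π₊²)ℓ₊+π₋(π₊²−π₋)ℓ₋) dp̃₋]. -/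
open MeasureTheory


lemma comb7 {X : Type*} [MeasurableSpace X] (μ : Measure X) (f h : X → ℝ)
    (hf : Integrable f μ) (hh : Integrable h μ) (a b : ℝ) :
    ∫ x, (a * f x + b * h x) ∂μ = a * ∫ x, f x ∂μ + b * ∫ x, h x ∂μ := by
  rw [integral_add (hf.const_mul a) (hh.const_mul b), integral_const_mul, integral_const_mul]

lemma split7 {X : Type*} [MeasurableSpace X] (μ ν : Measure X) (a b : ℝ)
    (ha : 0 ≤ a) (hb : 0 ≤ b) (f : X → ℝ)
    (hfμ : Integrable f μ) (hfν : Integrable f ν) :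
    ∫ x, f x ∂(ENNReal.ofReal a • μ + ENNReal.ofReal b • ν)
      = a * ∫ x, f x ∂μ + b * ∫ x, f x ∂ν := by
  rw [integral_add_measure (hfμ.smul_measure ENNReal.ofReal_ne_top)
    (hfν.smul_measure ENNReal.ofReal_ne_top), integral_smul_measure, integral_smul_measure,
    ENNReal.toReal_ofReal ha, ENNReal.toReal_ofReal hb, smul_eq_mul, smul_eq_mul]

/-- Decomposition of the noisy similar SD-Pcomp risk:
`R̄_{S-PC}(g) = C_S·R_{S-PC}(g) + R₁^S(g) + R₂^S(g) + R₃^S(g)`. -/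
theorem stmt7
    {X : Type*} [MeasurableSpace X]
    (μp μn : Measure X) [IsProbabilityMeasure μp] [IsProbabilityMeasure μn]
    (πp πn πS πD : ℝ) (hπ0 : 0 < πp) (hπ1 : πp < 1) (hπhalf : πp ≠ 1/2)
    (hπn : πn = 1 - πp) (hπS : πS = πp^2 + πn^2) (hπD : πD = 2*πp*πn)
    (Cℓ : ℝ) (hCℓ : 0 < Cℓ)
    (ℓ : ℝ → ℤ → ℝ)
    (hℓbd : ∀ z : ℝ, ∀ t ∈ ({-1, 1} : Set ℤ), 0 ≤ ℓ z t ∧ ℓ z t ≤ Cℓ)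
    (hℓmeas : ∀ t ∈ ({-1, 1} : Set ℤ), Measurable fun z => ℓ z t)
    (g : X → ℝ) (hg : Measurable g)
    (ρS ρD ρC : ℝ)
    (hρS : ρS ∈ Set.Ico (0:ℝ) 1) (hρD : ρD ∈ Set.Ico (0:ℝ) 1) (hρC : ρC ∈ Set.Ico (0:ℝ) 1)
    (hden : 0 < πS*(1-ρS) + πD*ρD)
    (ptp ptn : Measure X)
    (hptp : ptp = ENNReal.ofReal (πp/(πp+πn^2)) • μp + ENNReal.ofReal (πn^2/(πp+πn^2)) • μn)
    (hptn : ptn = ENNReal.ofReal (πp^2/(πp^2+πn)) • μp + ENNReal.ofReal (πn/(πp^2+πn)) • μn)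
    (pbp pbn : Measure X)
    (hpbp : pbp = ENNReal.ofReal (1-ρC) • ptp + ENNReal.ofReal ρC • ptn)
    (hpbn : pbn = ENNReal.ofReal ρC • ptp + ENNReal.ofReal (1-ρC) • ptn) :
    (πS*(1-ρS)/((πS*(1-ρS)+πD*ρD)*(πp-πn))) *
        (πp^2 * (∫ x, (πp * ℓ (g x) 1 - πn * ℓ (g x) (-1)) ∂pbp)
          + πn^2 * (∫ x, (πp * ℓ (g x) 1 - πn * ℓ (g x) (-1)) ∂pbn))
      + (πS*ρD/((πS*(1-ρS)+πD*ρD)*(πp-πn))) *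
        ((∫ x, (πp*(πn-πp^2) * ℓ (g x) 1 + πn*(πp^2-πn) * ℓ (g x) (-1)) ∂pbp)
          + (∫ x, (πp*(πp-πn^2) * ℓ (g x) 1 + πn*(πn^2-πp) * ℓ (g x) (-1)) ∂pbn))
    =
    (πS*(1-ρS)*(1-ρC)/(πS*(1-ρS)+πD*ρD)) *
        ((1/(πp-πn)) *
          ((∫ x, (πp^3 * ℓ (g x) 1 - πp^2*πn * ℓ (g x) (-1)) ∂ptp)
            + (∫ x, (πp*πn^2 * ℓ (g x) 1 - πn^3 * ℓ (g x) (-1)) ∂ptn)))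
      + (πS*(1-ρS)*ρC/((πS*(1-ρS)+πD*ρD)*(πp-πn))) *
        (πn^2 * (∫ x, (πp * ℓ (g x) 1 - πn * ℓ (g x) (-1)) ∂ptp)
          + πp^2 * (∫ x, (πp * ℓ (g x) 1 - πn * ℓ (g x) (-1)) ∂ptn))
      + (πS*ρD*(1-ρC)/((πS*(1-ρS)+πD*ρD)*(πp-πn))) *
        ((∫ x, (πp*(πn-πp^2) * ℓ (g x) 1 + πn*(πp^2-πn) * ℓ (g x) (-1)) ∂ptp)
          + (∫ x, (πp*(πp-πn^2) * ℓ (g x) 1 + πn*(πn^2-πp) * ℓ (g x) (-1)) ∂ptn))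
      + (πS*ρD*ρC/((πS*(1-ρS)+πD*ρD)*(πp-πn))) *
        ((∫ x, (πp*(πp-πn^2) * ℓ (g x) 1 + πn*(πn^2-πp) * ℓ (g x) (-1)) ∂ptp)
          + (∫ x, (πp*(πn-πp^2) * ℓ (g x) 1 + πn*(πp^2-πn) * ℓ (g x) (-1)) ∂ptn)) := by
  have hπn' : 0 ≤ πn := by rw [hπn]; linarith
  have hf1 : Measurable fun x => ℓ (g x) 1 := ((hℓmeas 1 (by simp)).comp hg)
  have hf2 : Measurable fun x => ℓ (g x) (-1) := ((hℓmeas (-1) (by simp)).comp hg)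
  have hc1 : (0:ℝ) ≤ πp/(πp+πn^2) := by positivity
  have hc2 : (0:ℝ) ≤ πn^2/(πp+πn^2) := by positivity
  have hc3 : (0:ℝ) ≤ πp^2/(πp^2+πn) := by positivity
  have hc4 : (0:ℝ) ≤ πn/(πp^2+πn) := by positivity
  haveI Ip : IsFiniteMeasure ptp := by
    constructor
    rw [hptp]
    simp only [Measure.add_apply, Measure.smul_apply, measure_univ, smul_eq_mul, mul_one]
    exact ENNReal.add_lt_top.2 ⟨ENNReal.ofReal_lt_top, ENNReal.ofReal_lt_top⟩
  haveI In : IsFiniteMeasure ptn := by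
    constructor
    rw [hptn]
    simp only [Measure.add_apply, Measure.smul_apply, measure_univ, smul_eq_mul, mul_one]
    exact ENNReal.add_lt_top.2 ⟨ENNReal.ofReal_lt_top, ENNReal.ofReal_lt_top⟩
  have hint : ∀ (f : X → ℝ), Measurable f → (∀ x, 0 ≤ f x ∧ f x ≤ Cℓ) →
      ∀ (μ : Measure X), IsFiniteMeasure μ → Integrable f μ := by
    intro f hfm hfb μ hμ
    refine Integrable.mono' (integrable_const Cℓ) hfm.aestronglyMeasurable ?_
    filter_upwards with x
    rw [Real.norm_eq_abs, abs_le]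
    constructor
    · linarith [(hfb x).1, hCℓ]
    · exact (hfb x).2
  have h1p : Integrable (fun x => ℓ (g x) 1) ptp :=
    hint _ hf1 (fun x => hℓbd (g x) 1 (by simp)) ptp Ip
  have h1n : Integrable (fun x => ℓ (g x) 1) ptn :=
    hint _ hf1 (fun x => hℓbd (g x) 1 (by simp)) ptn In
  have h2p : Integrable (fun x => ℓ (g x) (-1)) ptp :=
    hint _ hf2 (fun x => hℓbd (g x) (-1) (by simp)) ptp Ip
  have h2n : Integrable (fun x => ℓ (g x) (-1)) ptn :=
    hint _ hf2 (fun x => hℓbd (g x) (-1) (by simp)) ptn In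
  set A := ∫ x, ℓ (g x) 1 ∂ptp with hA
  set B := ∫ x, ℓ (g x) (-1) ∂ptp with hB
  set C := ∫ x, ℓ (g x) 1 ∂ptn with hC
  set D := ∫ x, ℓ (g x) (-1) ∂ptn with hD
  have key : ∀ (a b : ℝ),
      (∫ x, (a * ℓ (g x) 1 + b * ℓ (g x) (-1)) ∂pbp
        = (1-ρC) * (a*A + b*B) + ρC * (a*C + b*D)) ∧
      (∫ x, (a * ℓ (g x) 1 + b * ℓ (g x) (-1)) ∂pbn
        = ρC * (a*A + b*B) + (1-ρC) * (a*C + b*D)) ∧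
      (∫ x, (a * ℓ (g x) 1 + b * ℓ (g x) (-1)) ∂ptp = a*A + b*B) ∧
      (∫ x, (a * ℓ (g x) 1 + b * ℓ (g x) (-1)) ∂ptn = a*C + b*D) := by
    intro a b
    have hcp : ∫ x, (a * ℓ (g x) 1 + b * ℓ (g x) (-1)) ∂ptp = a*A + b*B :=
      comb7 ptp _ _ h1p h2p a b
    have hcn : ∫ x, (a * ℓ (g x) 1 + b * ℓ (g x) (-1)) ∂ptn = a*C + b*D :=
      comb7 ptn _ _ h1n h2n a b
    have hip : Integrable (fun x => a * ℓ (g x) 1 + b * ℓ (g x) (-1)) ptp :=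
      (h1p.const_mul a).add (h2p.const_mul b)
    have hin : Integrable (fun x => a * ℓ (g x) 1 + b * ℓ (g x) (-1)) ptn :=
      (h1n.const_mul a).add (h2n.const_mul b)
    refine ⟨?_, ?_, hcp, hcn⟩
    · rw [hpbp, split7 ptp ptn (1-ρC) ρC (by linarith [hρC.2]) hρC.1 _ hip hin, hcp, hcn]
    · rw [hpbn, split7 ptp ptn ρC (1-ρC) hρC.1 (by linarith [hρC.2]) _ hip hin] <;>
        rw [hcp, hcn]
  have e1 := (key πp (-πn)).1
  have e2 := (key πp (-πn)).2.1
  have e3 := (key (πp*(πn-πp^2)) (πn*(πp^2-πn))).1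
  have e4 := (key (πp*(πp-πn^2)) (πn*(πn^2-πp))).2.1
  have e5 := (key (πp^3) (-(πp^2*πn))).2.2.1
  have e6 := (key (πp*πn^2) (-(πn^3))).2.2.2
  have e7 := (key πp (-πn)).2.2.1
  have e8 := (key πp (-πn)).2.2.2
  have e9 := (key (πp*(πn-πp^2)) (πn*(πp^2-πn))).2.2.1
  have e10 := (key (πp*(πp-πn^2)) (πn*(πn^2-πp))).2.2.2
  have e11 := (key (πp*(πp-πn^2)) (πn*(πn^2-πp))).2.2.1
  have e12 := (key (πp*(πn-πp^2)) (πn*(πp^2-πn))).2.2.2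
  simp only [neg_mul, ← sub_eq_add_neg] at e1 e2 e5 e6 e7 e8
  rw [e1, e2, e3, e4, e5, e6, e7, e8, e9, e10, e11, e12]
  have hne1 : πS*(1-ρS)+πD*ρD ≠ 0 := ne_of_gt hden
  have hne2 : πp - πn ≠ 0 := by
    rw [hπn]
    intro h
    apply hπhalf
    linarith
  field_simp
  ring
end

section
/- Define the noisy dissimilar SD-Pcomp risk R̄_{D-PC}(g) = [π_Dρ_S/((π_Sρ_S+π_D(1−ρ_D))(π₊−π₋))]·[π₊²∫(−π₋ℓ₊+π₊ℓ₋) dp̄₊ + π₋²∫(−π₋ℓ₊+π₊ℓ₋) dp̄₋] + [π_D(1−ρ_D)/((π_Sρ_S+π_D(1−ρ_D))(π₊−π₋))]·[∫(π₋(π₊²−π₋)ℓ₊+π₊(π₋−π₊²)ℓ₋) dp̄₊ + ∫(π₋(π₋²−π₊)ℓ₊+π₊(π₊−π₋²)ℓ₋) dp̄₋]. Then R̄_{D-PC}(g) = C_D·R_{D-PC}(g) + R₁^D(g) + R₂^D(g) + R₃^D(g), where C_D = π_D(1−ρ_D)(1−ρ_C)/(π_Sρ_S+π_D(1−ρ_D)),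 R₁^D(g) = [π_D(1−ρ_D)ρ_C/((π_Sρ_S+π_D(1−ρ_D))(π₊−π₋))]·[∫(π₋(π₋²−π₊)ℓ₊+π₊(π₊−π₋²)ℓ₋) dp̃₊ + ∫(π₋(π₊²−π₋)ℓ₊+π₊(π₋−π₊²)ℓ₋) dp̃₋], R₂^D(g) = [π_Dρ_S(1−ρ_C)/((π_Sρ_S+π_D(1−ρ_D))(π₊−π₋))]·[π₊²∫(−π₋ℓ₊+π₊ℓ₋) dp̃₊ + π₋²∫(−π₋ℓ₊+π₊ℓ₋) dp̃₋], and R₃^D(g) = [π_Dρ_Sρ_C/((π_Sρ_S+π_D(1−ρ_D))(π₊−π₋))]·[π₋²∫(−π₋ℓ₊+π₊ℓ₋) dp̃₊ + π₊²∫(−π₋ℓ₊+π₊ℓ₋) dp̃₋]. -/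
open MeasureTheory

lemma stmt8_aux_fin {X : Type*} [MeasurableSpace X]
    (μ ν : Measure X) [IsFiniteMeasure μ] [IsFiniteMeasure ν] (c d : ℝ) :
    IsFiniteMeasure (ENNReal.ofReal c • μ + ENNReal.ofReal d • ν) := by
  constructor
  simp only [Measure.add_apply, Measure.smul_apply, smul_eq_mul]
  exact ENNReal.add_lt_top.2 ⟨ENNReal.mul_lt_top ENNReal.ofReal_lt_top (measure_lt_top μ _),
    ENNReal.mul_lt_top ENNReal.ofReal_lt_top (measure_lt_top ν _)⟩

lemma stmt8_aux_int {X : Type*} [MeasurableSpace X]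
    (μ ν : Measure X) (c d : ℝ) (hc : 0 ≤ c) (hd : 0 ≤ d) (f : X → ℝ)
    (hfμ : Integrable f μ) (hfν : Integrable f ν) :
    ∫ x, f x ∂(ENNReal.ofReal c • μ + ENNReal.ofReal d • ν)
      = c * ∫ x, f x ∂μ + d * ∫ x, f x ∂ν := by
  rw [integral_add_measure (hfμ.smul_measure ENNReal.ofReal_ne_top)
      (hfν.smul_measure ENNReal.ofReal_ne_top),
    integral_smul_measure, integral_smul_measure,
    ENNReal.toReal_ofReal hc, ENNReal.toReal_ofReal hd, smul_eq_mul, smul_eq_mul]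

/-- Decomposition of the noisy dissimilar SD-Pcomp risk:
`R̄_{D-PC}(g) = C_D·R_{D-PC}(g) + R₁^D(g) + R₂^D(g) + R₃^D(g)`. -/
theorem stmt8
    {X : Type*} [MeasurableSpace X]
    (μp μn : Measure X) [IsProbabilityMeasure μp] [IsProbabilityMeasure μn]
    (πp πn πS πD : ℝ) (hπ0 : 0 < πp) (hπ1 : πp < 1) (hπhalf : πp ≠ 1/2)
    (hπn : πn = 1 - πp) (hπS : πS = πp^2 + πn^2) (hπD : πD = 2*πp*πn)
    (Cℓ : ℝ) (hCℓ : 0 < Cℓ)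
    (ℓ : ℝ → ℤ → ℝ)
    (hℓbd : ∀ z : ℝ, ∀ t ∈ ({-1, 1} : Set ℤ), 0 ≤ ℓ z t ∧ ℓ z t ≤ Cℓ)
    (hℓmeas : ∀ t ∈ ({-1, 1} : Set ℤ), Measurable fun z => ℓ z t)
    (g : X → ℝ) (hg : Measurable g)
    (ρS ρD ρC : ℝ)
    (hρS : ρS ∈ Set.Ico (0:ℝ) 1) (hρD : ρD ∈ Set.Ico (0:ℝ) 1) (hρC : ρC ∈ Set.Ico (0:ℝ) 1)
    (hden : 0 < πS*ρS + πD*(1-ρD))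
    (ptp ptn : Measure X)
    (hptp : ptp = ENNReal.ofReal (πp/(πp+πn^2)) • μp + ENNReal.ofReal (πn^2/(πp+πn^2)) • μn)
    (hptn : ptn = ENNReal.ofReal (πp^2/(πp^2+πn)) • μp + ENNReal.ofReal (πn/(πp^2+πn)) • μn)
    (pbp pbn : Measure X)
    (hpbp : pbp = ENNReal.ofReal (1-ρC) • ptp + ENNReal.ofReal ρC • ptn)
    (hpbn : pbn = ENNReal.ofReal ρC • ptp + ENNReal.ofReal (1-ρC) • ptn) :
    (πD*ρS/((πS*ρS+πD*(1-ρD))*(πp-πn))) *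
        (πp^2 * (∫ x, (-(πn * ℓ (g x) 1) + πp * ℓ (g x) (-1)) ∂pbp)
          + πn^2 * (∫ x, (-(πn * ℓ (g x) 1) + πp * ℓ (g x) (-1)) ∂pbn))
      + (πD*(1-ρD)/((πS*ρS+πD*(1-ρD))*(πp-πn))) *
        ((∫ x, (πn*(πp^2-πn) * ℓ (g x) 1 + πp*(πn-πp^2) * ℓ (g x) (-1)) ∂pbp)
          + (∫ x, (πn*(πn^2-πp) * ℓ (g x) 1 + πp*(πp-πn^2) * ℓ (g x) (-1)) ∂pbn))
    =
    (πD*(1-ρD)*(1-ρC)/(πS*ρS+πD*(1-ρD))) *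
        ((1/(πp-πn)) *
          ((∫ x, (πn*(πp^2-πn) * ℓ (g x) 1 + πp*(πn-πp^2) * ℓ (g x) (-1)) ∂ptp)
            + (∫ x, (πn*(πn^2-πp) * ℓ (g x) 1 + πp*(πp-πn^2) * ℓ (g x) (-1)) ∂ptn)))
      + (πD*(1-ρD)*ρC/((πS*ρS+πD*(1-ρD))*(πp-πn))) *
        ((∫ x, (πn*(πn^2-πp) * ℓ (g x) 1 + πp*(πp-πn^2) * ℓ (g x) (-1)) ∂ptp)
          + (∫ x, (πn*(πp^2-πn) * ℓ (g x) 1 + πp*(πn-πp^2) * ℓ (g x) (-1)) ∂ptn))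
      + (πD*ρS*(1-ρC)/((πS*ρS+πD*(1-ρD))*(πp-πn))) *
        (πp^2 * (∫ x, (-(πn * ℓ (g x) 1) + πp * ℓ (g x) (-1)) ∂ptp)
          + πn^2 * (∫ x, (-(πn * ℓ (g x) 1) + πp * ℓ (g x) (-1)) ∂ptn))
      + (πD*ρS*ρC/((πS*ρS+πD*(1-ρD))*(πp-πn))) *
        (πn^2 * (∫ x, (-(πn * ℓ (g x) 1) + πp * ℓ (g x) (-1)) ∂ptp)
          + πp^2 * (∫ x, (-(πn * ℓ (g x) 1) + πp * ℓ (g x) (-1)) ∂ptn)) := by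
  have hc2 : (0:ℝ) ≤ ρC := hρC.1
  have hc1 : (0:ℝ) ≤ 1 - ρC := by linarith [hρC.2]
  have hfinp : IsFiniteMeasure ptp := by rw [hptp]; exact stmt8_aux_fin _ _ _ _
  have hfinn : IsFiniteMeasure ptn := by rw [hptn]; exact stmt8_aux_fin _ _ _ _
  have hFmeas : ∀ t ∈ ({-1, 1} : Set ℤ), Measurable fun x => ℓ (g x) t := fun t ht =>
    (hℓmeas t ht).comp hg
  have hFint : ∀ (μ : Measure X), IsFiniteMeasure μ → ∀ t ∈ ({-1, 1} : Set ℤ),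
      Integrable (fun x => ℓ (g x) t) μ := by
    intro μ hμ t ht
    refine Integrable.mono' (integrable_const Cℓ) (hFmeas t ht).aestronglyMeasurable ?_
    filter_upwards with x
    rw [Real.norm_eq_abs, abs_of_nonneg (hℓbd (g x) t ht).1]
    exact (hℓbd (g x) t ht).2
  have h1 : (-1 : ℤ) ∈ ({-1, 1} : Set ℤ) := Or.inl rfl
  have h2 : (1 : ℤ) ∈ ({-1, 1} : Set ℤ) := Or.inr rfl
  have hint : ∀ (μ : Measure X), IsFiniteMeasure μ → ∀ a b : ℝ,
      Integrable (fun x => a * ℓ (g x) 1 + b * ℓ (g x) (-1)) μ := by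
    intro μ hμ a b
    exact ((hFint μ hμ 1 h2).const_mul a).add ((hFint μ hμ (-1) h1).const_mul b)
  have hintI : ∀ (μ : Measure X), IsFiniteMeasure μ →
      Integrable (fun x => -(πn * ℓ (g x) 1) + πp * ℓ (g x) (-1)) μ := by
    intro μ hμ
    have := hint μ hμ (-πn) πp
    simpa [neg_mul] using this
  -- decompose the noisy integrals
  have eI_p : (∫ x, (-(πn * ℓ (g x) 1) + πp * ℓ (g x) (-1)) ∂pbp)
      = (1-ρC) * (∫ x, (-(πn * ℓ (g x) 1) + πp * ℓ (g x) (-1)) ∂ptp)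
        + ρC * (∫ x, (-(πn * ℓ (g x) 1) + πp * ℓ (g x) (-1)) ∂ptn) := by
    rw [hpbp]; exact stmt8_aux_int _ _ _ _ hc1 hc2 _ (hintI ptp hfinp) (hintI ptn hfinn)
  have eI_n : (∫ x, (-(πn * ℓ (g x) 1) + πp * ℓ (g x) (-1)) ∂pbn)
      = ρC * (∫ x, (-(πn * ℓ (g x) 1) + πp * ℓ (g x) (-1)) ∂ptp)
        + (1-ρC) * (∫ x, (-(πn * ℓ (g x) 1) + πp * ℓ (g x) (-1)) ∂ptn) := by
    rw [hpbn]; exact stmt8_aux_int _ _ _ _ hc2 hc1 _ (hintI ptp hfinp) (hintI ptn hfinn)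
  have eJ_p : (∫ x, (πn*(πp^2-πn) * ℓ (g x) 1 + πp*(πn-πp^2) * ℓ (g x) (-1)) ∂pbp)
      = (1-ρC) * (∫ x, (πn*(πp^2-πn) * ℓ (g x) 1 + πp*(πn-πp^2) * ℓ (g x) (-1)) ∂ptp)
        + ρC * (∫ x, (πn*(πp^2-πn) * ℓ (g x) 1 + πp*(πn-πp^2) * ℓ (g x) (-1)) ∂ptn) := by
    rw [hpbp]
    exact stmt8_aux_int _ _ _ _ hc1 hc2 _ (hint ptp hfinp _ _) (hint ptn hfinn _ _)
  have eK_n : (∫ x, (πn*(πn^2-πp) * ℓ (g x) 1 + πp*(πp-πn^2) * ℓ (g x) (-1)) ∂pbn)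
      = ρC * (∫ x, (πn*(πn^2-πp) * ℓ (g x) 1 + πp*(πp-πn^2) * ℓ (g x) (-1)) ∂ptp)
        + (1-ρC) * (∫ x, (πn*(πn^2-πp) * ℓ (g x) 1 + πp*(πp-πn^2) * ℓ (g x) (-1)) ∂ptn) := by
    rw [hpbn]
    exact stmt8_aux_int _ _ _ _ hc2 hc1 _ (hint ptp hfinp _ _) (hint ptn hfinn _ _)
  have hd1 : (πS*ρS+πD*(1-ρD)) ≠ 0 := ne_of_gt hden
  have hd2 : πp - πn ≠ 0 := by
    rw [hπn]; intro h; apply hπhalf; linarith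
  rw [eI_p, eI_n, eJ_p, eK_n]
  field_simp
  ring
end

section
/- With R̂_{S-PC}(g) = (1/((π₊−π₋)n))·Σ_{i=1}^{n}[π₊³ℓ(g(x_i),+1) − π₊²π₋ℓ(g(x_i),−1) + π₊π₋²ℓ(g(x'_i),+1) − π₋³ℓ(g(x'_i),−1)] and R̂^{π̄}_{S-PC}(g) the same expression with (π̄₊, π̄₋) in place of (π₊, π₋), one has |R̂^{π̄}_{S-PC}(g) − R̂_{S-PC}(g)| ≤ [C_ℓ·|π̄₊−π₊|/(|π̄₊−π̄₋|·|π₊−π₋|)] · { |2π̄₊π₊(π̄₊+π₊) − π̄₊² − π̄₊π₊ − π₊²| + |π̄₊π₊(1−π̄₋−π₋) + π̄₋π₋(π̄₊+π₊)| + |π̄₋π₋(1−π̄₊−π₊) + π̄₊π₊(π̄₋+π₋)| + |2π̄₋π₋(π̄₋+π₋) − π̄₋² − π̄₋π₋ − π₋²| }. -/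
open Finset

/-- Effect of an inaccurate class prior on the empirical similar SD-Pcomp risk. -/
theorem stmt9
    {X : Type*} (g : X → ℝ)
    (Cℓ : ℝ) (hCℓ : 0 < Cℓ)
    (ℓ : ℝ → ℤ → ℝ)
    (hℓbd : ∀ z : ℝ, ∀ t ∈ ({-1, 1} : Set ℤ), 0 ≤ ℓ z t ∧ ℓ z t ≤ Cℓ)
    (πp πn πbp πbn : ℝ)
    (hπ0 : 0 < πp) (hπ1 : πp < 1) (hπhalf : πp ≠ 1/2) (hπn : πn = 1 - πp)
    (hπb0 : 0 < πbp) (hπb1 : πbp < 1) (hπbhalf : πbp ≠ 1/2) (hπbn : πbn = 1 - πbp)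
    (n : ℕ) (hn : 0 < n) (x x' : Fin n → X) :
    |(1/((πbp - πbn)*(n : ℝ))) * ∑ i : Fin n,
        (πbp^3 * ℓ (g (x i)) 1 - πbp^2*πbn * ℓ (g (x i)) (-1)
          + πbp*πbn^2 * ℓ (g (x' i)) 1 - πbn^3 * ℓ (g (x' i)) (-1))
      - (1/((πp - πn)*(n : ℝ))) * ∑ i : Fin n,
        (πp^3 * ℓ (g (x i)) 1 - πp^2*πn * ℓ (g (x i)) (-1)
          + πp*πn^2 * ℓ (g (x' i)) 1 - πn^3 * ℓ (g (x' i)) (-1))|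
    ≤ (Cℓ * |πbp - πp| / (|πbp - πbn| * |πp - πn|)) *
      (|2*πbp*πp*(πbp+πp) - πbp^2 - πbp*πp - πp^2|
        + |πbp*πp*(1-πbn-πn) + πbn*πn*(πbp+πp)|
        + |πbn*πn*(1-πbp-πp) + πbp*πp*(πbn+πn)|
        + |2*πbn*πn*(πbn+πn) - πbn^2 - πbn*πn - πn^2|) := by
  have hn' : (n : ℝ) ≠ 0 := Nat.cast_ne_zero.mpr hn.ne'
  have hnpos : (0 : ℝ) < n := Nat.cast_pos.mpr hn
  subst hπn hπbn
  have hb : πp - (1 - πp) ≠ 0 := fun h => hπhalf (by linarith)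
  have ha : πbp - (1 - πbp) ≠ 0 := fun h => hπbhalf (by linarith)
  have ha' : |πbp - (1 - πbp)| ≠ 0 := abs_ne_zero.mpr ha
  have hb' : |πp - (1 - πp)| ≠ 0 := abs_ne_zero.mpr hb
  set T1 := 2*πbp*πp*(πbp+πp) - πbp^2 - πbp*πp - πp^2 with hT1
  set T2 := πbp*πp*(1-(1-πbp)-(1-πp)) + (1-πbp)*(1-πp)*(πbp+πp) with hT2
  set T3 := (1-πbp)*(1-πp)*(1-πbp-πp) + πbp*πp*((1-πbp)+(1-πp)) with hT3
  set T4 := 2*(1-πbp)*(1-πp)*((1-πbp)+(1-πp)) - (1-πbp)^2 - (1-πbp)*(1-πp) - (1-πp)^2 with hT4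
  set D := πbp - πp with hD
  set a := πbp - (1 - πbp) with haa
  set b := πp - (1 - πp) with hbb
  have hℓ1 : ∀ z : ℝ, |ℓ z 1| ≤ Cℓ := fun z => by
    obtain ⟨h0, h1⟩ := hℓbd z 1 (by simp)
    rw [abs_of_nonneg h0]; exact h1
  have hℓm : ∀ z : ℝ, |ℓ z (-1)| ≤ Cℓ := fun z => by
    obtain ⟨h0, h1⟩ := hℓbd z (-1) (by simp)
    rw [abs_of_nonneg h0]; exact h1
  have key : (1/(a*(n:ℝ))) * ∑ i : Fin n,
        (πbp^3 * ℓ (g (x i)) 1 - πbp^2*(1-πbp) * ℓ (g (x i)) (-1)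
          + πbp*(1-πbp)^2 * ℓ (g (x' i)) 1 - (1-πbp)^3 * ℓ (g (x' i)) (-1))
      - (1/(b*(n:ℝ))) * ∑ i : Fin n,
        (πp^3 * ℓ (g (x i)) 1 - πp^2*(1-πp) * ℓ (g (x i)) (-1)
          + πp*(1-πp)^2 * ℓ (g (x' i)) 1 - (1-πp)^3 * ℓ (g (x' i)) (-1))
      = ∑ i : Fin n, (D/(a*b*(n:ℝ))) *
          (T1 * ℓ (g (x i)) 1 + T2 * ℓ (g (x i)) (-1)
            - T3 * ℓ (g (x' i)) 1 - T4 * ℓ (g (x' i)) (-1)) := by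
    rw [Finset.mul_sum, Finset.mul_sum, ← Finset.sum_sub_distrib]
    refine Finset.sum_congr rfl fun i _ => ?_
    rw [hT1, hT2, hT3, hT4, hD, haa, hbb]
    have ha2 : πbp - (1 - πbp) ≠ 0 := ha
    have hb2 : πp - (1 - πp) ≠ 0 := hb
    field_simp
    ring
  rw [key]
  have habs : |D/(a*b*(n:ℝ))| = |D| / (|a| * |b| * (n:ℝ)) := by
    rw [abs_div, abs_mul, abs_mul, abs_of_pos hnpos]
  calc |∑ i : Fin n, (D/(a*b*(n:ℝ))) *
          (T1 * ℓ (g (x i)) 1 + T2 * ℓ (g (x i)) (-1)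
            - T3 * ℓ (g (x' i)) 1 - T4 * ℓ (g (x' i)) (-1))|
      ≤ ∑ i : Fin n, |(D/(a*b*(n:ℝ))) *
          (T1 * ℓ (g (x i)) 1 + T2 * ℓ (g (x i)) (-1)
            - T3 * ℓ (g (x' i)) 1 - T4 * ℓ (g (x' i)) (-1))| :=
        Finset.abs_sum_le_sum_abs _ _
    _ ≤ ∑ _i : Fin n, (|D| / (|a| * |b| * (n:ℝ))) *
          ((|T1| + |T2| + |T3| + |T4|) * Cℓ) := by
        refine Finset.sum_le_sum fun i _ => ?_
        rw [abs_mul, habs]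
        refine mul_le_mul_of_nonneg_left ?_ (by positivity)
        have e : T1 * ℓ (g (x i)) 1 + T2 * ℓ (g (x i)) (-1)
            - T3 * ℓ (g (x' i)) 1 - T4 * ℓ (g (x' i)) (-1)
            = T1 * ℓ (g (x i)) 1 + T2 * ℓ (g (x i)) (-1)
              + (-(T3 * ℓ (g (x' i)) 1)) + (-(T4 * ℓ (g (x' i)) (-1))) := by ring
        rw [e]
        have h1 : |T1 * ℓ (g (x i)) 1| ≤ |T1| * Cℓ := by
          rw [abs_mul]; exact mul_le_mul_of_nonneg_left (hℓ1 _) (abs_nonneg _)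
        have h2 : |T2 * ℓ (g (x i)) (-1)| ≤ |T2| * Cℓ := by
          rw [abs_mul]; exact mul_le_mul_of_nonneg_left (hℓm _) (abs_nonneg _)
        have h3 : |T3 * ℓ (g (x' i)) 1| ≤ |T3| * Cℓ := by
          rw [abs_mul]; exact mul_le_mul_of_nonneg_left (hℓ1 _) (abs_nonneg _)
        have h4 : |T4 * ℓ (g (x' i)) (-1)| ≤ |T4| * Cℓ := by
          rw [abs_mul]; exact mul_le_mul_of_nonneg_left (hℓm _) (abs_nonneg _)
        calc |T1 * ℓ (g (x i)) 1 + T2 * ℓ (g (x i)) (-1)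
              + (-(T3 * ℓ (g (x' i)) 1)) + (-(T4 * ℓ (g (x' i)) (-1)))|
            ≤ |T1 * ℓ (g (x i)) 1 + T2 * ℓ (g (x i)) (-1)
              + (-(T3 * ℓ (g (x' i)) 1))| + |(-(T4 * ℓ (g (x' i)) (-1)))| :=
              abs_add_le _ _
          _ ≤ |T1 * ℓ (g (x i)) 1 + T2 * ℓ (g (x i)) (-1)|
              + |(-(T3 * ℓ (g (x' i)) 1))| + |(-(T4 * ℓ (g (x' i)) (-1)))| := by
              gcongr; exact abs_add_le _ _
          _ ≤ |T1 * ℓ (g (x i)) 1| + |T2 * ℓ (g (x i)) (-1)|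
              + |T3 * ℓ (g (x' i)) 1| + |T4 * ℓ (g (x' i)) (-1)| := by
              rw [abs_neg, abs_neg]; gcongr; exact abs_add_le _ _
          _ ≤ |T1| * Cℓ + |T2| * Cℓ + |T3| * Cℓ + |T4| * Cℓ := by
              gcongr
          _ = (|T1| + |T2| + |T3| + |T4|) * Cℓ := by ring
    _ = (Cℓ * |D| / (|a| * |b|)) * (|T1| + |T2| + |T3| + |T4|) := by
        rw [Finset.sum_const, Finset.card_univ, Fintype.card_fin, nsmul_eq_mul]
        field_simp
end

section
/- With R̂_{D-PC}(g) = (1/((π₊−π₋)n))·Σ_{i=1}^{n}[π₋(π₊²−π₋)ℓ(g(x_i),+1) + π₊(π₋−π₊²)ℓ(g(x_i),−1) + π₋(π₋²−π₊)ℓ(g(x'_i),+1) + π₊(π₊−π₋²)ℓ(g(x'_i),−1)] and R̂^{π̄}_{D-PC}(g) the same expression with (π̄₊, π̄₋) in place of (π₊, π₋), one has |R̂^{π̄}_{D-PC}(g) − R̂_{D-PC}(g)| ≤ [C_ℓ·|π̄₊−π₊|/(|π̄₊−π̄₋|·|π₊−π₋|)] · { |(π̄₊+π₊)(1−π̄₊π₊−π̄₋π₋)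 − π̄₊π₊| + |π̄₊² + π₊² − 2π̄₊π₊(π̄₊+π₊) − π̄₋π₋| + |π̄₋² + π₋² − 2π̄₋π₋(π̄₋+π₋) − π̄₊π₊| + |(π̄₋+π₋)(1−π̄₊π₊−π̄₋π₋) − π̄₋π₋| }. -/
open Finset

/-- Effect of an inaccurate class prior on the empirical dissimilar SD-Pcomp risk. -/
theorem stmt10
    {X : Type*} (g : X → ℝ)
    (Cℓ : ℝ) (hCℓ : 0 < Cℓ)
    (ℓ : ℝ → ℤ → ℝ)
    (hℓbd : ∀ z : ℝ, ∀ t ∈ ({-1, 1} : Set ℤ), 0 ≤ ℓ z t ∧ ℓ z t ≤ Cℓ)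
    (πp πn πbp πbn : ℝ)
    (hπ0 : 0 < πp) (hπ1 : πp < 1) (hπhalf : πp ≠ 1/2) (hπn : πn = 1 - πp)
    (hπb0 : 0 < πbp) (hπb1 : πbp < 1) (hπbhalf : πbp ≠ 1/2) (hπbn : πbn = 1 - πbp)
    (n : ℕ) (hn : 0 < n) (x x' : Fin n → X) :
    |(1/((πbp - πbn)*(n : ℝ))) * ∑ i : Fin n,
        (πbn*(πbp^2-πbn) * ℓ (g (x i)) 1 + πbp*(πbn-πbp^2) * ℓ (g (x i)) (-1)
          + πbn*(πbn^2-πbp) * ℓ (g (x' i)) 1 + πbp*(πbp-πbn^2) * ℓ (g (x' i)) (-1))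
      - (1/((πp - πn)*(n : ℝ))) * ∑ i : Fin n,
        (πn*(πp^2-πn) * ℓ (g (x i)) 1 + πp*(πn-πp^2) * ℓ (g (x i)) (-1)
          + πn*(πn^2-πp) * ℓ (g (x' i)) 1 + πp*(πp-πn^2) * ℓ (g (x' i)) (-1))|
    ≤ (Cℓ * |πbp - πp| / (|πbp - πbn| * |πp - πn|)) *
      (|(πbp+πp)*(1-πbp*πp-πbn*πn) - πbp*πp|
        + |πbp^2 + πp^2 - 2*πbp*πp*(πbp+πp) - πbn*πn|
        + |πbn^2 + πn^2 - 2*πbn*πn*(πbn+πn) - πbp*πp|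
        + |(πbn+πn)*(1-πbp*πp-πbn*πn) - πbn*πn|) := by
  subst hπn hπbn
  have hd : πp - (1 - πp) ≠ 0 := by
    intro h; apply hπhalf; linarith
  have hdb : πbp - (1 - πbp) ≠ 0 := by
    intro h; apply hπbhalf; linarith
  have hnn : (n : ℝ) ≠ 0 := Nat.cast_ne_zero.mpr hn.ne'
  set Δ := πbp - πp with hΔ
  set d := πp - (1 - πp) with hdd
  set db := πbp - (1 - πbp) with hddb
  set E1 := (πbp+πp)*(1-πbp*πp-(1-πbp)*(1-πp)) - πbp*πp with hE1
  set E2 := πbp^2 + πp^2 - 2*πbp*πp*(πbp+πp) - (1-πbp)*(1-πp) with hE2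
  set E3 := (1-πbp)^2 + (1-πp)^2 - 2*(1-πbp)*(1-πp)*((1-πbp)+(1-πp)) - πbp*πp with hE3
  set E4 := ((1-πbp)+(1-πp))*(1-πbp*πp-(1-πbp)*(1-πp)) - (1-πbp)*(1-πp) with hE4
  set B1 := (1-πbp)*(πbp^2-(1-πbp))/db - (1-πp)*(πp^2-(1-πp))/d with hB1
  set B2 := πbp*((1-πbp)-πbp^2)/db - πp*((1-πp)-πp^2)/d with hB2
  set B3 := (1-πbp)*((1-πbp)^2-πbp)/db - (1-πp)*((1-πp)^2-πp)/d with hB3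
  set B4 := πbp*(πbp-(1-πbp)^2)/db - πp*(πp-(1-πp)^2)/d with hB4
  have hb1 : B1 = Δ * E1 / (db * d) := by
    rw [hB1, hΔ, hE1]; field_simp; ring
  have hb2 : B2 = Δ * E2 / (db * d) := by
    rw [hB2, hΔ, hE2]; field_simp; ring
  have hb3 : B3 = -(Δ * E3) / (db * d) := by
    rw [hB3, hΔ, hE3]; field_simp; ring
  have hb4 : B4 = -(Δ * E4) / (db * d) := by
    rw [hB4, hΔ, hE4]; field_simp; ring
  have habs : ∀ (z : ℝ) (t : ℤ), t ∈ ({-1, 1} : Set ℤ) → |ℓ z t| ≤ Cℓ := by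
    intro z t ht
    rcases hℓbd z t ht with ⟨h0, h1⟩
    rw [abs_of_nonneg h0]; exact h1
  -- rewrite LHS as sum of per-sample differences
  have key : (1/(db*(n : ℝ))) * ∑ i : Fin n,
        ((1-πbp)*(πbp^2-(1-πbp)) * ℓ (g (x i)) 1 + πbp*((1-πbp)-πbp^2) * ℓ (g (x i)) (-1)
          + (1-πbp)*((1-πbp)^2-πbp) * ℓ (g (x' i)) 1 + πbp*(πbp-(1-πbp)^2) * ℓ (g (x' i)) (-1))
      - (1/(d*(n : ℝ))) * ∑ i : Fin n,
        ((1-πp)*(πp^2-(1-πp)) * ℓ (g (x i)) 1 + πp*((1-πp)-πp^2) * ℓ (g (x i)) (-1)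
          + (1-πp)*((1-πp)^2-πp) * ℓ (g (x' i)) 1 + πp*(πp-(1-πp)^2) * ℓ (g (x' i)) (-1))
      = ∑ i : Fin n, (1/(n:ℝ)) *
          (B1 * ℓ (g (x i)) 1 + B2 * ℓ (g (x i)) (-1)
            + B3 * ℓ (g (x' i)) 1 + B4 * ℓ (g (x' i)) (-1)) := by
    rw [Finset.mul_sum, Finset.mul_sum, ← Finset.sum_sub_distrib]
    refine Finset.sum_congr rfl fun i _ => ?_
    rw [hB1, hB2, hB3, hB4]
    field_simp
    ring
  rw [key]
  have hbound : ∀ i : Fin n,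
      |(1/(n:ℝ)) * (B1 * ℓ (g (x i)) 1 + B2 * ℓ (g (x i)) (-1)
          + B3 * ℓ (g (x' i)) 1 + B4 * ℓ (g (x' i)) (-1))|
      ≤ (1/(n:ℝ)) * ((|B1| + |B2| + |B3| + |B4|) * Cℓ) := by
    intro i
    rw [abs_mul]
    have h1 : |ℓ (g (x i)) 1| ≤ Cℓ := habs _ 1 (by simp)
    have h2 : |ℓ (g (x i)) (-1)| ≤ Cℓ := habs _ (-1) (by simp)
    have h3 : |ℓ (g (x' i)) 1| ≤ Cℓ := habs _ 1 (by simp)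
    have h4 : |ℓ (g (x' i)) (-1)| ≤ Cℓ := habs _ (-1) (by simp)
    have hnpos : (0:ℝ) < (n:ℝ) := Nat.cast_pos.mpr hn
    rw [abs_of_nonneg (by positivity : (0:ℝ) ≤ 1/(n:ℝ))]
    refine mul_le_mul_of_nonneg_left ?_ (by positivity)
    calc |B1 * ℓ (g (x i)) 1 + B2 * ℓ (g (x i)) (-1)
          + B3 * ℓ (g (x' i)) 1 + B4 * ℓ (g (x' i)) (-1)|
        ≤ |B1 * ℓ (g (x i)) 1| + |B2 * ℓ (g (x i)) (-1)|
          + |B3 * ℓ (g (x' i)) 1| + |B4 * ℓ (g (x' i)) (-1)| := by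
          exact (abs_add_le _ _).trans (by gcongr; exact (abs_add_le _ _).trans (by gcongr; exact abs_add_le _ _))
      _ ≤ |B1| * Cℓ + |B2| * Cℓ + |B3| * Cℓ + |B4| * Cℓ := by
          rw [abs_mul, abs_mul, abs_mul, abs_mul]
          gcongr <;> first | exact h1 | exact h2 | exact h3 | exact h4
      _ = (|B1| + |B2| + |B3| + |B4|) * Cℓ := by ring
  calc |∑ i : Fin n, (1/(n:ℝ)) *
          (B1 * ℓ (g (x i)) 1 + B2 * ℓ (g (x i)) (-1)
            + B3 * ℓ (g (x' i)) 1 + B4 * ℓ (g (x' i)) (-1))|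
      ≤ ∑ i : Fin n, (1/(n:ℝ)) * ((|B1| + |B2| + |B3| + |B4|) * Cℓ) :=
        (Finset.abs_sum_le_sum_abs _ _).trans (Finset.sum_le_sum fun i _ => hbound i)
    _ = (|B1| + |B2| + |B3| + |B4|) * Cℓ := by
        rw [Finset.sum_const, Finset.card_univ, Fintype.card_fin, nsmul_eq_mul]
        field_simp
    _ = (Cℓ * |Δ| / (|db| * |d|)) * (|E1| + |E2| + |E3| + |E4|) := by
        rw [hb1, hb2, hb3, hb4]
        simp only [abs_div, abs_neg, abs_mul]
        ring
end

section
/- For any two measurable functions g, g' : X → ℝ and any ρ_C ∈ [0,1), the Pcomp-noise bias term satisfies | (ρ_C/((π₊−π₋)(1−ρ_C))) · { π₋²·∫[π₊(ℓ(g(x),+1) − ℓ(g'(x),+1)) − π₋(ℓ(g(x),−1) − ℓ(g'(x),−1))] dp̃₊(x) + π₊²·∫[π₊(ℓ(g(x),+1) − ℓ(g'(x),+1)) − π₋(ℓ(g(x),−1) − ℓ(g'(x),−1))] dp̃₋(x) } | ≤ π_S·C_ℓ·ρ_C/(|π₊−π₋|·(1−ρ_C)). -/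
open MeasureTheory

/-- Bound on the Pcomp-noise bias term. -/
theorem stmt16
    {X : Type*} [MeasurableSpace X]
    (μp μn : Measure X) [IsProbabilityMeasure μp] [IsProbabilityMeasure μn]
    (πp πn πS πD : ℝ) (hπ0 : 0 < πp) (hπ1 : πp < 1) (hπhalf : πp ≠ 1/2)
    (hπn : πn = 1 - πp) (hπS : πS = πp^2 + πn^2) (hπD : πD = 2*πp*πn)
    (Cℓ : ℝ) (hCℓ : 0 < Cℓ)
    (ℓ : ℝ → ℤ → ℝ)
    (hℓbd : ∀ z : ℝ, ∀ t ∈ ({-1, 1} : Set ℤ), 0 ≤ ℓ z t ∧ ℓ z t ≤ Cℓ)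
    (hℓmeas : ∀ t ∈ ({-1, 1} : Set ℤ), Measurable fun z => ℓ z t)
    (ptp ptn : Measure X)
    (hptp : ptp = ENNReal.ofReal (πp/(πp+πn^2)) • μp + ENNReal.ofReal (πn^2/(πp+πn^2)) • μn)
    (hptn : ptn = ENNReal.ofReal (πp^2/(πp^2+πn)) • μp + ENNReal.ofReal (πn/(πp^2+πn)) • μn)
    (g g' : X → ℝ) (hg : Measurable g) (hg' : Measurable g')
    (ρC : ℝ) (hρC : ρC ∈ Set.Ico (0:ℝ) 1) :
    |(ρC/((πp-πn)*(1-ρC))) *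
        (πn^2 * (∫ x, (πp * (ℓ (g x) 1 - ℓ (g' x) 1)
            - πn * (ℓ (g x) (-1) - ℓ (g' x) (-1))) ∂ptp)
          + πp^2 * (∫ x, (πp * (ℓ (g x) 1 - ℓ (g' x) 1)
            - πn * (ℓ (g x) (-1) - ℓ (g' x) (-1))) ∂ptn))|
      ≤ πS * Cℓ * ρC / (|πp-πn| * (1-ρC)) := by
  obtain ⟨hρ0, hρ1⟩ := hρC
  have hπn0 : 0 < πn := by rw [hπn]; linarith
  have hπn1 : πn < 1 := by rw [hπn]; linarith
  set f : X → ℝ := fun x => πp * (ℓ (g x) 1 - ℓ (g' x) 1)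
      - πn * (ℓ (g x) (-1) - ℓ (g' x) (-1)) with hf
  -- pointwise bound
  have hfb : ∀ x, ‖f x‖ ≤ Cℓ := by
    intro x
    have h1 := hℓbd (g x) 1 (by simp)
    have h2 := hℓbd (g' x) 1 (by simp)
    have h3 := hℓbd (g x) (-1) (by simp)
    have h4 := hℓbd (g' x) (-1) (by simp)
    rw [Real.norm_eq_abs, abs_le]
    constructor <;> simp only [hf] <;> nlinarith [h1.1, h1.2, h2.1, h2.2, h3.1, h3.2, h4.1, h4.2]
  -- the measures are probability measures
  have hmass : ∀ (ν : Measure X) (a b : ℝ), 0 ≤ a → 0 ≤ b → a + b = 1 →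
      ν = ENNReal.ofReal a • μp + ENNReal.ofReal b • μn → IsProbabilityMeasure ν := by
    intro ν a b ha hb hab hν
    constructor
    rw [hν]
    simp [Measure.add_apply, Measure.smul_apply, smul_eq_mul,
      ← ENNReal.ofReal_add ha hb, hab]
  have hd1 : πp + πn^2 > 0 := by positivity
  have hd2 : πp^2 + πn > 0 := by positivity
  have hptpP : IsProbabilityMeasure ptp :=
    hmass ptp _ _ (by positivity) (by positivity) (by field_simp) hptp
  have hptnP : IsProbabilityMeasure ptn :=
    hmass ptn _ _ (by positivity) (by positivity) (by field_simp) hptn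
  have hI : ∀ (ν : Measure X), IsProbabilityMeasure ν → |∫ x, f x ∂ν| ≤ Cℓ := by
    intro ν hν
    have := norm_integral_le_of_norm_le_const (μ := ν) (C := Cℓ)
      (Filter.Eventually.of_forall hfb)
    simpa using this
  have hI1 := hI ptp hptpP
  have hI2 := hI ptn hptnP
  have hB : |πn^2 * (∫ x, f x ∂ptp) + πp^2 * (∫ x, f x ∂ptn)| ≤ πS * Cℓ := by
    calc |πn^2 * (∫ x, f x ∂ptp) + πp^2 * (∫ x, f x ∂ptn)|
        ≤ |πn^2 * (∫ x, f x ∂ptp)| + |πp^2 * (∫ x, f x ∂ptn)| := abs_add_le _ _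
      _ ≤ πn^2 * Cℓ + πp^2 * Cℓ := by
          rw [abs_mul, abs_mul, abs_of_nonneg (by positivity : (0:ℝ) ≤ πn^2),
            abs_of_nonneg (by positivity : (0:ℝ) ≤ πp^2)]
          gcongr
      _ = πS * Cℓ := by rw [hπS]; ring
  have hDne : πp - πn ≠ 0 := by
    rw [hπn]; intro h; apply hπhalf; linarith
  have hDpos : 0 < |πp - πn| := abs_pos.mpr hDne
  have hρpos : 0 < 1 - ρC := by linarith
  rw [abs_mul, abs_div, abs_mul, abs_of_nonneg hρ0, abs_of_nonneg (le_of_lt hρpos)]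
  calc ρC / (|πp - πn| * (1 - ρC)) * |πn^2 * (∫ x, f x ∂ptp) + πp^2 * (∫ x, f x ∂ptn)|
      ≤ ρC / (|πp - πn| * (1 - ρC)) * (πS * Cℓ) := by
        apply mul_le_mul_of_nonneg_left hB (by positivity)
    _ = πS * Cℓ * ρC / (|πp - πn| * (1 - ρC)) := by ring
end

section
/- For any two measurable functions g, g' : X → ℝ and any ρ_S, ρ_D ∈ [0,1), the SD-noise bias term satisfies | (ρ_D/((π₊−π₋)(1−ρ_S))) · { ∫[π₊(π₋−π₊²)(ℓ(g(x),+1) − ℓ(g'(x),+1)) + π₋(π₊²−π₋)(ℓ(g(x),−1) − ℓ(g'(x),−1))] dp̃₊(x) + ∫[π₊(π₊−π₋²)(ℓ(g(x),+1) − ℓ(g'(x),+1)) + π₋(π₋²−π₊)(ℓ(g(x),−1) − ℓ(g'(x),−1))] dp̃₋(x) } | ≤ (|π₊²−π₋| + |π₊−π₋²|)·C_ℓ·ρ_D/(|π₊−π₋|·(1−ρ_S)). -/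
open MeasureTheory

lemma stmt17_aux {X : Type*} [MeasurableSpace X] (μ : Measure X)
    [IsProbabilityMeasure μ] (f : X → ℝ) (C : ℝ) (h : ∀ x, |f x| ≤ C) :
    |∫ x, f x ∂μ| ≤ C := by
  have := norm_integral_le_of_norm_le_const (μ := μ) (f := f) (C := C)
    (Filter.Eventually.of_forall fun x => h x)
  simpa using this

lemma stmt17_prob {X : Type*} [MeasurableSpace X] (μp μn : Measure X)
    [IsProbabilityMeasure μp] [IsProbabilityMeasure μn] (a b : ℝ)
    (ha : 0 ≤ a) (hb : 0 ≤ b) (hab : a + b = 1) :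
    IsProbabilityMeasure (ENNReal.ofReal a • μp + ENNReal.ofReal b • μn) := by
  constructor
  simp [Measure.add_apply, ← ENNReal.ofReal_add ha hb, hab]

/-- Bound on the SD-noise bias term. -/
theorem stmt17
    {X : Type*} [MeasurableSpace X]
    (μp μn : Measure X) [IsProbabilityMeasure μp] [IsProbabilityMeasure μn]
    (πp πn πS πD : ℝ) (hπ0 : 0 < πp) (hπ1 : πp < 1) (hπhalf : πp ≠ 1/2)
    (hπn : πn = 1 - πp) (hπS : πS = πp^2 + πn^2) (hπD : πD = 2*πp*πn)
    (Cℓ : ℝ) (hCℓ : 0 < Cℓ)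
    (ℓ : ℝ → ℤ → ℝ)
    (hℓbd : ∀ z : ℝ, ∀ t ∈ ({-1, 1} : Set ℤ), 0 ≤ ℓ z t ∧ ℓ z t ≤ Cℓ)
    (hℓmeas : ∀ t ∈ ({-1, 1} : Set ℤ), Measurable fun z => ℓ z t)
    (ptp ptn : Measure X)
    (hptp : ptp = ENNReal.ofReal (πp/(πp+πn^2)) • μp + ENNReal.ofReal (πn^2/(πp+πn^2)) • μn)
    (hptn : ptn = ENNReal.ofReal (πp^2/(πp^2+πn)) • μp + ENNReal.ofReal (πn/(πp^2+πn)) • μn)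
    (g g' : X → ℝ) (hg : Measurable g) (hg' : Measurable g')
    (ρS ρD : ℝ) (hρS : ρS ∈ Set.Ico (0:ℝ) 1) (hρD : ρD ∈ Set.Ico (0:ℝ) 1) :
    |(ρD/((πp-πn)*(1-ρS))) *
        ((∫ x, (πp*(πn-πp^2) * (ℓ (g x) 1 - ℓ (g' x) 1)
            + πn*(πp^2-πn) * (ℓ (g x) (-1) - ℓ (g' x) (-1))) ∂ptp)
          + (∫ x, (πp*(πp-πn^2) * (ℓ (g x) 1 - ℓ (g' x) 1)
            + πn*(πn^2-πp) * (ℓ (g x) (-1) - ℓ (g' x) (-1))) ∂ptn))|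
      ≤ (|πp^2-πn| + |πp-πn^2|) * Cℓ * ρD / (|πp-πn| * (1-ρS)) := by
  have hπn0 : 0 ≤ πn := by rw [hπn]; linarith
  have hπp1 : 0 < πp := hπ0
  -- probability measure instances
  have hd1 : 0 < πp + πn^2 := by positivity
  have hd2 : 0 < πp^2 + πn := by rw [hπn]; nlinarith
  have hprob1 : IsProbabilityMeasure ptp := by
    rw [hptp]
    exact stmt17_prob μp μn _ _ (by positivity) (by positivity)
      (by field_simp)
  have hprob2 : IsProbabilityMeasure ptn := by
    rw [hptn]
    exact stmt17_prob μp μn _ _ (by positivity) (by positivity)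
      (by field_simp)
  -- pointwise bounds on loss differences
  have hA : ∀ x, |ℓ (g x) 1 - ℓ (g' x) 1| ≤ Cℓ := by
    intro x
    have h1 := hℓbd (g x) 1 (by simp)
    have h2 := hℓbd (g' x) 1 (by simp)
    exact abs_sub_le_iff.mpr ⟨by linarith [h1.1, h1.2, h2.1, h2.2],
      by linarith [h1.1, h1.2, h2.1, h2.2]⟩
  have hB : ∀ x, |ℓ (g x) (-1) - ℓ (g' x) (-1)| ≤ Cℓ := by
    intro x
    have h1 := hℓbd (g x) (-1) (by simp)
    have h2 := hℓbd (g' x) (-1) (by simp)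
    exact abs_sub_le_iff.mpr ⟨by linarith [h1.1, h1.2, h2.1, h2.2],
      by linarith [h1.1, h1.2, h2.1, h2.2]⟩
  -- bound each integral
  have key : ∀ (c1 c2 : ℝ) (x : X),
      |c1 * (ℓ (g x) 1 - ℓ (g' x) 1) + c2 * (ℓ (g x) (-1) - ℓ (g' x) (-1))|
        ≤ (|c1| + |c2|) * Cℓ := by
    intro c1 c2 x
    calc _ ≤ |c1 * (ℓ (g x) 1 - ℓ (g' x) 1)| + |c2 * (ℓ (g x) (-1) - ℓ (g' x) (-1))| :=
          abs_add_le _ _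
      _ ≤ |c1| * Cℓ + |c2| * Cℓ := by
          rw [abs_mul, abs_mul]
          gcongr
          · exact hA x
          · exact hB x
      _ = (|c1| + |c2|) * Cℓ := by ring
  have habs1 : |πp*(πn-πp^2)| + |πn*(πp^2-πn)| = |πp^2-πn| := by
    rw [abs_mul, abs_mul, abs_of_pos hπp1, abs_of_nonneg hπn0, abs_sub_comm πn (πp^2)]
    nlinarith [abs_nonneg (πp^2 - πn)]
  have habs2 : |πp*(πp-πn^2)| + |πn*(πn^2-πp)| = |πp-πn^2| := by
    rw [abs_mul, abs_mul, abs_of_pos hπp1, abs_of_nonneg hπn0, abs_sub_comm (πn^2) πp]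
    nlinarith [abs_nonneg (πp - πn^2)]
  have hI1 : |∫ x, (πp*(πn-πp^2) * (ℓ (g x) 1 - ℓ (g' x) 1)
      + πn*(πp^2-πn) * (ℓ (g x) (-1) - ℓ (g' x) (-1))) ∂ptp| ≤ |πp^2-πn| * Cℓ := by
    have := stmt17_aux ptp _ ((|πp*(πn-πp^2)| + |πn*(πp^2-πn)|) * Cℓ)
      (fun x => key (πp*(πn-πp^2)) (πn*(πp^2-πn)) x)
    rwa [habs1] at this
  have hI2 : |∫ x, (πp*(πp-πn^2) * (ℓ (g x) 1 - ℓ (g' x) 1)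
      + πn*(πn^2-πp) * (ℓ (g x) (-1) - ℓ (g' x) (-1))) ∂ptn| ≤ |πp-πn^2| * Cℓ := by
    have := stmt17_aux ptn _ ((|πp*(πp-πn^2)| + |πn*(πn^2-πp)|) * Cℓ)
      (fun x => key (πp*(πp-πn^2)) (πn*(πn^2-πp)) x)
    rwa [habs2] at this
  -- combine
  have hsum : |(∫ x, (πp*(πn-πp^2) * (ℓ (g x) 1 - ℓ (g' x) 1)
            + πn*(πp^2-πn) * (ℓ (g x) (-1) - ℓ (g' x) (-1))) ∂ptp)
          + (∫ x, (πp*(πp-πn^2) * (ℓ (g x) 1 - ℓ (g' x) 1)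
            + πn*(πn^2-πp) * (ℓ (g x) (-1) - ℓ (g' x) (-1))) ∂ptn)|
      ≤ (|πp^2-πn| + |πp-πn^2|) * Cℓ := by
    calc _ ≤ _ + _ := abs_add_le _ _
      _ ≤ |πp^2-πn| * Cℓ + |πp-πn^2| * Cℓ := add_le_add hI1 hI2
      _ = (|πp^2-πn| + |πp-πn^2|) * Cℓ := by ring
  have hρS1 : 0 < 1 - ρS := by linarith [hρS.2]
  have hne : πp - πn ≠ 0 := by
    rw [hπn]; intro h
    apply hπhalf; linarith
  have hcoef : |ρD/((πp-πn)*(1-ρS))| = ρD / (|πp-πn| * (1-ρS)) := by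
    rw [abs_div, abs_mul, abs_of_nonneg hρD.1, abs_of_pos hρS1]
  rw [abs_mul, hcoef]
  have hcnn : 0 ≤ ρD / (|πp-πn| * (1-ρS)) := div_nonneg hρD.1 (mul_nonneg (abs_nonneg _) hρS1.le)
  calc ρD / (|πp-πn| * (1-ρS)) * _ ≤ ρD / (|πp-πn| * (1-ρS)) * ((|πp^2-πn| + |πp-πn^2|) * Cℓ) :=
        mul_le_mul_of_nonneg_left hsum hcnn
    _ = (|πp^2-πn| + |πp-πn^2|) * Cℓ * ρD / (|πp-πn| * (1-ρS)) := by ring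
end

section
/- The class prior is determined by the probability of similar pairs: π_S − π_D = (2π₊ − 1)²; moreover, if π₊ ≥ 1/2 then π₊ = (1 + √(2π_S − 1))/2, and if π₊ ≤ 1/2 then π₊ = (1 − √(2π_S − 1))/2. -/
/-- The class prior is determined by the probability of similar pairs:
`π_S − π_D = (2π₊ − 1)²`, and `π₊ = (1 ± √(2π_S − 1))/2` according to whether
`π₊ ≥ 1/2` or `π₊ ≤ 1/2`. -/
theorem stmt18 (πp πn πS πD : ℝ) (h0 : 0 ≤ πp) (h1 : πp ≤ 1)
    (hπn : πn = 1 - πp) (hπS : πS = πp^2 + πn^2) (hπD : πD = 2*πp*πn) :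
    πS - πD = (2*πp - 1)^2
    ∧ (1/2 ≤ πp → πp = (1 + Real.sqrt (2*πS - 1))/2)
    ∧ (πp ≤ 1/2 → πp = (1 - Real.sqrt (2*πS - 1))/2) := by
  subst hπn hπS hπD
  have hkey : 2*(πp^2 + (1-πp)^2) - 1 = (2*πp-1)^2 := by ring
  refine ⟨by ring, ?_, ?_⟩
  · intro h
    rw [hkey, Real.sqrt_sq (by linarith)]
    ring
  · intro h
    have : (2*πp-1)^2 = (1-2*πp)^2 := by ring
    rw [hkey, this, Real.sqrt_sq (by linarith)]
    ring
end
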